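/- arXiv:1310.4358 — 14 statements merged into one kernel-verified Lean document; each statement's English description precedes it below -/
import Mathlib

section
/- Let q = 2^m, n odd, and L an F_q-linear map on F_q (equivalently, a linearized polynomial over F_q). Suppose x·L(x) + v·x is a complete permutation polynomial over F_q for some v ∈ F_q \ {0,1}. Then for any u ∈ F_q, the map F(x) = x·(L(Tr(x)) + u·Tr(x) + u·x) + v·x is a complete permutation polynomial over F_{q^n}, where Tr denotes the trace from F_{q^n} to F_q. -/
section Aux

private lemma double_sum_char_two {R : Type*} [CommRing R] (h2 : (2:R) = 0) {ι : Type*}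
    [Fintype ι] [DecidableEq ι] (g : ι → ι → R) (hg : ∀ i j, g i j = g j i) :
    ∑ i, ∑ j, g i j = ∑ i, g i i := by
  classical
  have h1 : ∑ i, ∑ j, g i j = ∑ p ∈ Finset.univ ×ˢ Finset.univ, g p.1 p.2 :=
    (Finset.sum_product' _ _ _).symm
  rw [h1, ← Finset.diag_union_offDiag, Finset.sum_union (Finset.disjoint_diag_offDiag _),
    Finset.sum_diag]
  have hoff : ∑ p ∈ (Finset.univ : Finset ι).offDiag, g p.1 p.2 = 0 := by
    apply Finset.sum_involution (fun p _ => Prod.swap p)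
    · intro p hp
      simp only [Prod.fst_swap, Prod.snd_swap]
      rw [hg p.2 p.1, ← two_mul, h2, zero_mul]
    · intro p hp _ hc
      have := (Prod.ext_iff.mp hc).1
      simp only [Finset.mem_offDiag] at hp
      exact hp.2.2 this.symm
    · intro p hp
      simp only [Finset.mem_offDiag] at hp ⊢
      exact ⟨Finset.mem_univ _, Finset.mem_univ _, fun h => hp.2.2 h.symm⟩
    · intro p hp; rfl
  rw [hoff, add_zero]

private lemma matrix_trace_sq_char_two {R : Type*} [CommRing R] (h2 : (2:R) = 0)
    {ι : Type*} [Fintype ι] [DecidableEq ι] (A : Matrix ι ι R) :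
    Matrix.trace (A * A) = (Matrix.trace A) ^ 2 := by
  have h1 : Matrix.trace (A * A) = ∑ i, ∑ j, A i j * A j i := by
    simp [Matrix.trace, Matrix.mul_apply, Matrix.diag]
  have h2' : (Matrix.trace A) ^ 2 = ∑ i, ∑ j, A i i * A j j := by
    simp [Matrix.trace, sq, Finset.sum_mul_sum, Matrix.diag]
  rw [h1, h2',
    double_sum_char_two h2 (fun i j => A i j * A j i) (fun i j => mul_comm _ _),
    double_sum_char_two h2 (fun i j => A i i * A j j) (fun i j => mul_comm _ _)]

variable {F K : Type*} [Field F] [Field K] [Algebra F K]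

private lemma trace_sq_char_two (h2 : (2:F) = 0) [FiniteDimensional F K] (x : K) :
    Algebra.trace F K (x * x) = (Algebra.trace F K x) ^ 2 := by
  let b := Module.finBasis F K
  rw [Algebra.trace_eq_matrix_trace b, Algebra.trace_eq_matrix_trace b, map_mul,
    matrix_trace_sq_char_two h2]

private lemma trace_algebraMap_odd (h2 : (2:F) = 0) {n : ℕ} (hn : Odd n)
    (hK : Module.finrank F K = n) (c : F) :
    Algebra.trace F K (algebraMap F K c) = c := by
  rw [Algebra.trace_algebraMap, hK]
  obtain ⟨k, rfl⟩ := hn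
  rw [nsmul_eq_mul]
  push_cast
  rw [h2]
  ring

private lemma key_bijective {F K : Type*} [Field F] [Fintype F] [Field K] [Algebra F K]
    (n : ℕ) (h2 : (2:F) = 0) (hn : Odd n)
    (hK : Module.finrank F K = n) (L : F → F) (hL0 : L 0 = 0)
    (v : F) (hv0 : v ≠ 0)
    (hg : Function.Bijective fun x => x * L x + v * x) (u : F) :
    Function.Bijective fun x : K =>
      x * (algebraMap F K (L (Algebra.trace F K x)) +
          algebraMap F K u * algebraMap F K (Algebra.trace F K x) +
          algebraMap F K u * x) +
        algebraMap F K v * x := by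
  have hfd : FiniteDimensional F K := FiniteDimensional.of_finrank_pos (hK ▸ hn.pos)
  have hfin : Finite K := Module.finite_of_finite F
  have h2K : (2:K) = 0 := by
    rw [show (2:K) = algebraMap F K 2 from (map_ofNat _ 2).symm, h2, map_zero]
  set f : K → K := fun x =>
      x * (algebraMap F K (L (Algebra.trace F K x)) +
          algebraMap F K u * algebraMap F K (Algebra.trace F K x) +
          algebraMap F K u * x) +
        algebraMap F K v * x with hf
  have hform : ∀ z : K, f z =
      algebraMap F K (L (Algebra.trace F K z) + u * Algebra.trace F K z + v) * z +
        algebraMap F K u * (z * z) := by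
    intro z
    simp only [hf, map_add, map_mul]
    ring
  have htr : ∀ z : K, Algebra.trace F K (f z) =
      Algebra.trace F K z * L (Algebra.trace F K z) + v * Algebra.trace F K z := by
    intro z
    rw [hform z, map_add, ← Algebra.smul_def, map_smul, ← Algebra.smul_def, map_smul,
      smul_eq_mul, smul_eq_mul, trace_sq_char_two h2]
    linear_combination u * (Algebra.trace F K z)^2 * h2
  rw [Finite.injective_iff_bijective.symm]
  intro x y hxy
  have htx : Algebra.trace F K x = Algebra.trace F K y := by
    apply hg.injective
    simp only
    rw [← htr x, ← htr y, hxy]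
  by_contra hne
  have hw0 : x - y ≠ 0 := sub_ne_zero.mpr hne
  have hx' := hform x
  rw [hxy, htx] at hx'
  have hy' := hform y
  have hdiff : algebraMap F K (L (Algebra.trace F K y) + u * Algebra.trace F K y + v) * x +
      algebraMap F K u * (x * x) =
      algebraMap F K (L (Algebra.trace F K y) + u * Algebra.trace F K y + v) * y +
      algebraMap F K u * (y * y) := hx'.symm.trans hy'
  have hzero : algebraMap F K (L (Algebra.trace F K y) + u * Algebra.trace F K y + v) * x +
      algebraMap F K u * (x * x) -
      (algebraMap F K (L (Algebra.trace F K y) + u * Algebra.trace F K y + v) * y +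
      algebraMap F K u * (y * y)) = 0 := sub_eq_zero.mpr hdiff
  have heq : (x - y) * (algebraMap F K (L (Algebra.trace F K y) + u * Algebra.trace F K y + v)
      + algebraMap F K u * (x - y)) = 0 := by
    linear_combination hzero + (algebraMap F K u) * y * (y - x) * h2K
  have hfac : algebraMap F K (L (Algebra.trace F K y) + u * Algebra.trace F K y + v)
      + algebraMap F K u * (x - y) = 0 := by
    rcases mul_eq_zero.mp heq with h | h
    · exact absurd h hw0
    · exact h
  have htrw : Algebra.trace F K (x - y) = 0 := by rw [map_sub, htx, sub_self]
  have hc : L (Algebra.trace F K y) + u * Algebra.trace F K y + v = 0 := by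
    have h := congrArg (Algebra.trace F K) hfac
    rw [map_add, trace_algebraMap_odd h2 hn hK, ← Algebra.smul_def, map_smul, smul_eq_mul,
      htrw, mul_zero, add_zero, map_zero] at h
    exact h
  have huw : algebraMap F K u * (x - y) = 0 := by
    rw [hc, map_zero, zero_add] at hfac
    exact hfac
  have hu0 : u = 0 := by
    rcases mul_eq_zero.mp huw with h | h
    · exact (algebraMap F K).injective (h.trans (map_zero _).symm)
    · exact absurd h hw0
  have ht0 : Algebra.trace F K y = 0 := by
    apply hg.injective
    show Algebra.trace F K y * L (Algebra.trace F K y) + v * Algebra.trace F K y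
        = 0 * L 0 + v * 0
    rw [hu0] at hc
    linear_combination Algebra.trace F K y * hc
  rw [ht0, hL0, hu0] at hc
  exact hv0 (by linear_combination hc)

end Aux

def IsCPP {K : Type*} [Field K] (f : K → K) : Prop :=
  Function.Bijective f ∧ Function.Bijective fun x => f x + x

theorem stmt1 {F K : Type*} [Field F] [Fintype F] [Field K] [Algebra F K]
    (m n : ℕ) (hm : 0 < m) (hn : Odd n)
    (hF : Fintype.card F = 2 ^ m) (hK : Module.finrank F K = n)
    (L : F → F) (a : Fin m → F) (hL : ∀ x, L x = ∑ i, a i * x ^ (2 ^ (i : ℕ)))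
    (v : F) (hv0 : v ≠ 0) (hv1 : v ≠ 1)
    (hcpp : IsCPP fun x => x * L x + v * x) (u : F) :
    IsCPP fun x : K =>
      x * (algebraMap F K (L (Algebra.trace F K x)) +
          algebraMap F K u * algebraMap F K (Algebra.trace F K x) +
          algebraMap F K u * x) +
        algebraMap F K v * x := by
  have h2 : (2:F) = 0 := by
    have hc : ((Fintype.card F : ℕ) : F) = 0 := FiniteField.cast_card_eq_zero F
    rw [hF] at hc
    push_cast at hc
    exact pow_eq_zero_iff hm.ne' |>.mp hc
  have hL0 : L 0 = 0 := by
    rw [hL]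
    apply Finset.sum_eq_zero
    intro i _
    rw [zero_pow (by positivity), mul_zero]
  constructor
  · exact key_bijective n h2 hn hK L hL0 v hv0 hcpp.1 u
  · have hv1' : v + 1 ≠ 0 := fun h => hv1 (by linear_combination h - h2)
    have hg' : Function.Bijective fun x : F => x * L x + (v + 1) * x := by
      have hfun : (fun x : F => x * L x + (v + 1) * x)
          = fun x : F => (x * L x + v * x) + x := by funext x; ring
      rw [hfun]
      exact hcpp.2
    have hbij := key_bijective n h2 hn hK L hL0 (v + 1) hv1' hg' u
    convert hbij using 1
    funext x
    simp only [map_add, map_one]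
    ring
end

section
/- Let q = 2^m. If L is a linearized polynomial over F_q such that x·L(x) is a permutation of F_q, then L itself is a bijection of F_q; consequently, x·L(x) and x·L(x) + x cannot both be permutation polynomials of F_q. -/
theorem stmt2 {F : Type*} [Field F] [Fintype F] (m : ℕ) (hm : 0 < m)
    (hF : Fintype.card F = 2 ^ m)
    (L : F → F) (a : Fin m → F) (hL : ∀ x, L x = ∑ i, a i * x ^ (2 ^ (i : ℕ))) :
    (Function.Bijective (fun x => x * L x) → Function.Bijective L) ∧
      ¬(Function.Bijective (fun x => x * L x) ∧
        Function.Bijective fun x => x * L x + x) := by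
  haveI hp : Fact (Nat.Prime 2) := ⟨Nat.prime_two⟩
  have h2 : (2 : F) ^ m = 0 := by
    have := FiniteField.cast_card_eq_zero F
    rw [hF] at this
    push_cast at this
    exact this
  have h20 : (2 : F) = 0 := pow_eq_zero_iff (by omega) |>.mp h2
  haveI hchar : CharP F 2 := by
    have hdvd : ringChar F ∣ 2 := ringChar.dvd (by exact_mod_cast h20)
    have hne : ringChar F ≠ 1 := CharP.ringChar_ne_one
    have heq : ringChar F = 2 := ((Nat.dvd_prime Nat.prime_two).mp hdvd).resolve_left hne
    exact ringChar.of_eq heq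
  have hL0 : L 0 = 0 := by
    simp [hL, zero_pow, (pow_pos (by norm_num : (0:ℕ) < 2) _).ne']
  have hLadd : ∀ x y : F, L (x + y) = L x + L y := by
    intro x y
    simp only [hL]
    rw [← Finset.sum_add_distrib]
    refine Finset.sum_congr rfl fun i _ => ?_
    rw [add_pow_char_pow, mul_add]
  have part1 : Function.Bijective (fun x => x * L x) → Function.Bijective L := by
    intro hf
    rw [← Finite.injective_iff_bijective]
    intro x y hxy
    have h0 : L (x + y) = 0 := by
      rw [hLadd, hxy, CharTwo.add_self_eq_zero]
    have key : (fun x => x * L x) (x + y) = (fun x => x * L x) 0 := by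
      simp only [h0, hL0, mul_zero]
    have hxy0 : x + y = 0 := hf.injective key
    have : x = -y := by linear_combination hxy0
    rwa [CharTwo.neg_eq] at this
  refine ⟨part1, ?_⟩
  rintro ⟨hf, hg⟩
  obtain ⟨x₀, hx₀⟩ := (part1 hf).surjective 1
  have hx0ne : x₀ ≠ 0 := by
    rintro rfl
    rw [hL0] at hx₀
    exact one_ne_zero hx₀.symm
  have key : (fun x => x * L x + x) x₀ = (fun x => x * L x + x) 0 := by
    simp only [hx₀, hL0, mul_one, mul_zero, add_zero, CharTwo.add_self_eq_zero]
  exact hx0ne (hg.injective key)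
end

section
/- For any positive integer m, any odd positive integer n, any u ∈ F_{2^m}, and any v ∈ F_{2^m} \ {0,1}, the map F(x) = x·(u·Tr(x) + u·x) + v·x is a complete permutation polynomial over F_{2^{nm}}, where Tr is the trace from F_{2^{nm}} to F_{2^m}. -/
theorem aux3 {F K : Type*} [Field F] [Fintype F] [Field K] [Algebra F K]
    (m n : ℕ) (hm : 0 < m) (hn : Odd n)
    (hF : Fintype.card F = 2 ^ m) (hK : Module.finrank F K = n)
    (u w : F) (hw : w ≠ 0) :
    Function.Bijective fun x : K =>
      x * (algebraMap F K u * algebraMap F K (Algebra.trace F K x) +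
          algebraMap F K u * x) +
        algebraMap F K w * x := by
  -- characteristic 2
  have hp2 : CharP F 2 := by
    set p := ringChar F with hpdef
    haveI : CharP F p := ringChar.charP F
    obtain ⟨k, hpp, hcard⟩ := FiniteField.card F p
    have hdvd : p ∣ 2 ^ m := by
      rw [← hF, hcard]; exact dvd_pow_self p k.ne_zero
    have hp2' : p ∣ 2 := hpp.dvd_of_dvd_pow hdvd
    have : p = 2 := (Nat.prime_dvd_prime_iff_eq hpp Nat.prime_two).mp hp2'
    rwa [this] at ‹CharP F p›
  haveI : CharP F 2 := hp2
  haveI : CharP K 2 := charP_of_injective_algebraMap (algebraMap F K).injective 2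
  haveI : Module.Finite F K := Module.finite_of_finrank_pos (hK ▸ hn.pos)
  haveI : Finite K := Module.finite_of_finite F
  haveI : FiniteDimensional F K := inferInstance
  have hAinj : Function.Injective (algebraMap F K) := (algebraMap F K).injective
  -- trace facts
  have htr2 : ∀ z : K, Algebra.trace F K (z * z) =
      Algebra.trace F K z * Algebra.trace F K z := by
    intro z
    apply hAinj
    rw [map_mul (algebraMap F K)]
    rw [trace_eq_sum_automorphisms, trace_eq_sum_automorphisms,
      CharTwo.sum_mul_self]
    simp [map_mul]
  have hlin : ∀ (c : F) (z : K), Algebra.trace F K (algebraMap F K c * z) =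
      c * Algebra.trace F K z := by
    intro c z
    rw [← Algebra.smul_def, map_smul, smul_eq_mul]
  have htrA : ∀ c : F, Algebra.trace F K (algebraMap F K c) = c := by
    intro c
    rw [Algebra.trace_algebraMap, hK, nsmul_eq_mul]
    obtain ⟨j, hj⟩ := hn
    have h2 : (2 : F) = 0 := by exact_mod_cast CharP.cast_eq_zero F 2
    rw [hj]
    push_cast
    rw [h2]
    ring
  set A := algebraMap F K with hA
  have h2K : (2 : K) = 0 := by exact_mod_cast CharP.cast_eq_zero K 2
  have h2F : (2 : F) = 0 := by exact_mod_cast CharP.cast_eq_zero F 2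
  -- trace of f x
  have hT : ∀ z : K, Algebra.trace F K
      (z * (A u * A (Algebra.trace F K z) + A u * z) + A w * z) =
      w * Algebra.trace F K z := by
    intro z
    have e : z * (A u * A (Algebra.trace F K z) + A u * z) + A w * z =
        A (u * Algebra.trace F K z) * z + A u * (z * z) + A w * z := by
      rw [map_mul]; ring
    rw [e, map_add, map_add, hlin, hlin, hlin, htr2]
    linear_combination (u * Algebra.trace F K z * Algebra.trace F K z) * h2F
  rw [← Finite.injective_iff_bijective]
  intro x y h
  simp only at h
  have ht : Algebra.trace F K x = Algebra.trace F K y := by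
    have := congrArg (Algebra.trace F K) h
    rw [hT, hT] at this
    exact mul_left_cancel₀ hw this
  set t := Algebra.trace F K x with htdef
  rw [← ht] at h
  set d := x - y with hd
  by_contra hxy
  have hd0 : d ≠ 0 := sub_ne_zero_of_ne hxy
  have hfac : d * (A u * A t + A u * d + A w) = 0 := by
    rw [hd]
    linear_combination h + (A u * (y * y - x * y)) * h2K
  have hz : A u * A t + A u * d + A w = 0 := by
    rcases mul_eq_zero.mp hfac with h' | h'
    · exact absurd h' hd0
    · exact h'
  by_cases hu : u = 0
  · rw [hu] at hz
    simp only [map_zero, zero_mul, zero_add] at hz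
    exact hw (hAinj (by simpa using hz))
  · have hAu : A u ≠ 0 := fun h' => hu (hAinj (by simpa using h'))
    have hdA : d = A (t + w / u) := by
      apply mul_left_cancel₀ hAu
      rw [map_add, map_div₀, mul_add, mul_div_cancel₀ _ hAu]
      linear_combination hz + (A u * d + A w) * h2K +
        (-(A u * x) + A u * y - A u * A t - 2 * A w) * h2K
    have htd : Algebra.trace F K d = 0 := by
      rw [hd, map_sub, ← htdef, ← ht, sub_self]
    rw [hdA, htrA] at htd
    rw [htd, map_zero] at hdA
    exact hd0 hdA

theorem stmt3 {F K : Type*} [Field F] [Fintype F] [Field K] [Algebra F K]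
    (m n : ℕ) (hm : 0 < m) (hn : Odd n)
    (hF : Fintype.card F = 2 ^ m) (hK : Module.finrank F K = n)
    (u v : F) (hv0 : v ≠ 0) (hv1 : v ≠ 1) :
    IsCPP fun x : K =>
      x * (algebraMap F K u * algebraMap F K (Algebra.trace F K x) +
          algebraMap F K u * x) +
        algebraMap F K v * x := by
  have hp2 : CharP F 2 := by
    set p := ringChar F with hpdef
    haveI : CharP F p := ringChar.charP F
    obtain ⟨k, hpp, hcard⟩ := FiniteField.card F p
    have hdvd : p ∣ 2 ^ m := by
      rw [← hF, hcard]; exact dvd_pow_self p k.ne_zero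
    have hp2' : p ∣ 2 := hpp.dvd_of_dvd_pow hdvd
    have : p = 2 := (Nat.prime_dvd_prime_iff_eq hpp Nat.prime_two).mp hp2'
    rwa [this] at ‹CharP F p›
  haveI := hp2
  constructor
  · exact aux3 m n hm hn hF hK u v hv0
  · have hv1' : v + 1 ≠ 0 := by
      intro h'
      apply hv1
      have hv : v = -1 := eq_neg_of_add_eq_zero_left h'
      rw [hv, CharTwo.neg_eq]
    have heq : (fun x : K =>
        (x * (algebraMap F K u * algebraMap F K (Algebra.trace F K x) +
          algebraMap F K u * x) + algebraMap F K v * x) + x) =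
        fun x : K =>
        x * (algebraMap F K u * algebraMap F K (Algebra.trace F K x) +
          algebraMap F K u * x) + algebraMap F K (v + 1) * x := by
      funext x
      rw [map_add, map_one]
      ring
    have := aux3 m n hm hn hF hK u (v + 1) hv1'
    simpa [heq] using this
end

section
/- For any positive integer m and any element v ∈ F_{2^m} with v ≠ 0 and v ≠ 1, the trinomial F(x) = x^{2^{2m}+1} + x^{2^m+1} + v·x is a complete permutation polynomial over F_{2^{3m}}. -/
/-!
Write `q = 2 ^ m`, `σ x = x ^ q` (so `σ³ = id` on `𝔽_{q³}`) and `T x = x + σ x + σ² x` for the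
trace onto `𝔽_q`. In characteristic 2 the trinomial is `F x = x T(x) + x² + c x` with `c ∈ 𝔽_q`,
and `T (F x) = c T(x)`. So `F x = F y` forces `T x = T y`, after which `F x + F y` factors as
`(x + y)(x + y + T y + c)`. In the second case `z = x + y` is `σ`-fixed, hence `T z = 3 z = z`,
while also `T z = 0`; so `x = y`. The same argument applies to `F x + x`, with `c + 1` for `c`.
-/

section CubicTrace

variable {K : Type*} [Field K] (σ : K →+* K)

def cubicTrace (x : K) : K := x + σ x + σ (σ x)

def trinomial (c x : K) : K := x * σ (σ x) + x * σ x + c * x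

theorem trinomial_add_self (c x : K) : trinomial σ c x + x = trinomial σ (c + 1) x := by
  simp only [trinomial]; ring

theorem cubicTrace_add (x y : K) : cubicTrace σ (x + y) = cubicTrace σ x + cubicTrace σ y := by
  simp only [cubicTrace, map_add]; ring

theorem cubicTrace_mul_of_map_eq {c : K} (hc : σ c = c) (x : K) :
    cubicTrace σ (c * x) = c * cubicTrace σ x := by
  simp only [cubicTrace, map_mul, hc]; ring

theorem map_cubicTrace (hσ : ∀ x, σ (σ (σ x)) = x) (x : K) :
    σ (cubicTrace σ x) = cubicTrace σ x := by
  simp only [cubicTrace, map_add, hσ]; ring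

theorem cubicTrace_mul_cubicTrace (hσ : ∀ x, σ (σ (σ x)) = x) (x : K) :
    cubicTrace σ (x * cubicTrace σ x) = cubicTrace σ x ^ 2 := by
  have hT := map_cubicTrace σ hσ x
  simp only [cubicTrace, map_mul] at hT ⊢
  rw [hT, hT]; ring

variable [CharP K 2]

theorem cubicTrace_of_map_eq {z : K} (hz : σ z = z) : cubicTrace σ z = z := by
  simp only [cubicTrace, hz, CharTwo.add_self_eq_zero, zero_add]

theorem cubicTrace_sq (x : K) : cubicTrace σ (x ^ 2) = cubicTrace σ x ^ 2 := by
  simp only [cubicTrace, map_pow, CharTwo.add_sq]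

theorem trinomial_eq (c x : K) :
    trinomial σ c x = x * cubicTrace σ x + x ^ 2 + c * x := by
  have h2 : (2 : K) = 0 := CharTwo.two_eq_zero
  simp only [trinomial, cubicTrace]
  linear_combination (-x ^ 2) * h2

theorem cubicTrace_trinomial (hσ : ∀ x, σ (σ (σ x)) = x) {c : K} (hc : σ c = c) (x : K) :
    cubicTrace σ (trinomial σ c x) = c * cubicTrace σ x := by
  rw [trinomial_eq, cubicTrace_add, cubicTrace_add, cubicTrace_mul_cubicTrace σ hσ,
    cubicTrace_sq, cubicTrace_mul_of_map_eq σ hc, CharTwo.add_self_eq_zero, zero_add]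

theorem trinomial_injective (hσ : ∀ x, σ (σ (σ x)) = x) {c : K} (hc0 : c ≠ 0) (hc : σ c = c) :
    Function.Injective (trinomial σ c) := by
  intro x y hxy
  have hT : cubicTrace σ x = cubicTrace σ y := mul_left_cancel₀ hc0 <| by
    rw [← cubicTrace_trinomial σ hσ hc, ← cubicTrace_trinomial σ hσ hc, hxy]
  rw [trinomial_eq, trinomial_eq, hT] at hxy
  have h2 : (2 : K) = 0 := CharTwo.two_eq_zero
  have hfac : (x + y) * (x + y + cubicTrace σ y + c) = 0 := by
    linear_combination hxy + (x * y + y * cubicTrace σ y + y ^ 2 + c * y) * h2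
  have hTsum : cubicTrace σ (x + y) = 0 := by
    rw [cubicTrace_add, hT, CharTwo.add_self_eq_zero]
  have hsum : x + y = 0 := by
    rcases mul_eq_zero.mp hfac with h | h
    · exact h
    · have hz : x + y = cubicTrace σ y + c := by
        linear_combination h - (cubicTrace σ y + c) * h2
      have hfix : σ (x + y) = x + y := by rw [hz, map_add, map_cubicTrace σ hσ, hc]
      rwa [cubicTrace_of_map_eq σ hfix] at hTsum
  linear_combination hsum - y * h2

theorem isCPP_trinomial [Finite K] (hσ : ∀ x, σ (σ (σ x)) = x) {c : K} (hc0 : c ≠ 0)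
    (hc1 : c ≠ 1) (hc : σ c = c) : IsCPP (trinomial σ c) := by
  have hc1' : c + 1 ≠ 0 := fun h => hc1 (CharTwo.add_eq_zero.mp h)
  refine ⟨Finite.injective_iff_bijective.mp (trinomial_injective σ hσ hc0 hc), ?_⟩
  simp only [trinomial_add_self]
  exact Finite.injective_iff_bijective.mp
    (trinomial_injective σ hσ hc1' (by rw [map_add, hc, map_one]))

end CubicTrace

theorem iterateFrobenius_iterate_three_apply {K : Type*} [Field K] [Fintype K] {p m : ℕ}
    [ExpChar K p] (hK : Fintype.card K = p ^ (3 * m)) (x : K) :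
    iterateFrobenius K p m (iterateFrobenius K p m (iterateFrobenius K p m x)) = x := by
  simp only [iterateFrobenius_def, ← pow_mul, ← pow_add]
  rw [show m + m + m = 3 * m by ring, ← hK, FiniteField.pow_card]

theorem stmt4_general {F K : Type*} [Field F] [Fintype F] [Field K] [Algebra F K]
    (m : ℕ)
    (hF : Fintype.card F = 2 ^ m) (hK : Module.finrank F K = 3)
    (v : F) (hv0 : v ≠ 0) (hv1 : v ≠ 1) :
    IsCPP fun x : K =>
      x ^ (2 ^ (2 * m) + 1) + x ^ (2 ^ m + 1) + algebraMap F K v * x := by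
  have : Fact (Nat.Prime 2) := ⟨Nat.prime_two⟩
  have : CharP F 2 := charP_of_card_eq_prime_pow hF
  have : CharP K 2 := charP_of_injective_algebraMap (algebraMap F K).injective 2
  have : Module.Finite F K := Module.finite_of_finrank_eq_succ hK
  have : Fintype K := Module.fintypeOfFintype (Module.finBasis F K)
  have hcard : Fintype.card K = 2 ^ (3 * m) := by
    rw [Module.card_eq_pow_finrank (K := F), hF, hK, ← pow_mul, mul_comm]
  set σ := iterateFrobenius K 2 m
  have hfix : σ (algebraMap F K v) = algebraMap F K v := by
    rw [iterateFrobenius_def, ← map_pow, ← hF, FiniteField.pow_card]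
  have hpoly : (fun x : K => x ^ (2 ^ (2 * m) + 1) + x ^ (2 ^ m + 1) + algebraMap F K v * x)
      = trinomial σ (algebraMap F K v) := by
    funext x
    simp only [trinomial, σ, iterateFrobenius_def, ← pow_mul, ← pow_add, two_mul]
    ring
  rw [hpoly]
  exact isCPP_trinomial σ (iterateFrobenius_iterate_three_apply hcard)
    ((map_ne_zero _).mpr hv0) (by simpa using (algebraMap F K).injective.ne hv1) hfix

theorem stmt4 {F K : Type*} [Field F] [Fintype F] [Field K] [Algebra F K]
    (m : ℕ) (hm : 0 < m)
    (hF : Fintype.card F = 2 ^ m) (hK : Module.finrank F K = 3)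
    (v : F) (hv0 : v ≠ 0) (hv1 : v ≠ 1) :
    IsCPP fun x : K =>
      x ^ (2 ^ (2 * m) + 1) + x ^ (2 ^ m + 1) + algebraMap F K v * x :=
  stmt4_general m hF hK v hv0 hv1
end

section
/- Let q = 2^m, n odd, d_1 | d_2 | ⋯ | d_s | n distinct positive integers, c_0 ∈ F_q, c_i ∈ F_{q^{d_i}} ∩ F_q for 1 ≤ i ≤ s (coefficients taken in the indicated subfields), c = Σ_{j=0}^s c_j, and c̃ ∈ F_q \ {0,1}. Then F(x) = x·(Σ_{i=0}^s c_i·Tr_{d_i m}^{nm}(x) + c·x) + c̃·x is a complete permutation polynomial over F_{q^n}, where d_0 = 1 and Tr_{d m}^{nm} denotes the trace from F_{2^{nm}} to F_{2^{dm}}. -/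
open Finset

lemma pow_pow_eq_self_of_dvd {M : Type*} [Monoid M] {p a b : ℕ} {z : M} (hz : z ^ p ^ a = z)
    (hab : a ∣ b) : z ^ p ^ b = z := by
  obtain ⟨k, rfl⟩ := hab
  induction k with
  | zero => simp
  | succ k ih => rw [mul_add_one, pow_add, pow_mul, ih, hz]

lemma dvd_of_le_of_dvd_or_dvd {a b : ℕ} (ha : 0 < a) (hab : a ≤ b) (h : a ∣ b ∨ b ∣ a) :
    a ∣ b :=
  h.elim id fun hba => le_antisymm hab (Nat.le_of_dvd ha hba) ▸ dvd_rfl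

section RelTrace

variable {K : Type*} [CommSemiring K] (p : ℕ) [ExpChar K p]

/-- On a field with `x ^ p ^ (a * N) = x` for all `x`, i.e. `F_{p^{aN}}`, this is the trace down to
`F_{p^a}`; thus `relTrace 2 (e * m) (n / e)` is the paper's `Tr_{em}^{nm}`. -/
def relTrace (a N : ℕ) : K →+ K :=
  ∑ k ∈ range N, (iterateFrobenius K p (a * k)).toAddMonoidHom

variable {p}

lemma relTrace_apply (a N : ℕ) (z : K) : relTrace p a N z = ∑ k ∈ range N, z ^ p ^ (a * k) := by
  simp [relTrace, iterateFrobenius_def]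

lemma relTrace_succ (a N : ℕ) (z : K) :
    relTrace p a (N + 1) z = relTrace p a N z + z ^ p ^ (a * N) := by
  simp only [relTrace_apply, sum_range_succ]

lemma relTrace_one (a : ℕ) (z : K) : relTrace p a 1 z = z := by
  simp [relTrace_apply]

lemma relTrace_mul_of_pow_eq_self {a : ℕ} {c : K} (hc : c ^ p ^ a = c) (N : ℕ) (z : K) :
    relTrace p a N (c * z) = c * relTrace p a N z := by
  simp only [relTrace_apply, mul_sum, mul_pow, pow_pow_eq_self_of_dvd hc (dvd_mul_right a _)]

lemma relTrace_of_pow_eq_self {a : ℕ} {z : K} (hz : z ^ p ^ a = z) (N : ℕ) :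
    relTrace p a N z = N • z := by
  simp [relTrace_apply, pow_pow_eq_self_of_dvd hz (dvd_mul_right a _)]

lemma relTrace_pow_char (a N : ℕ) (z : K) : relTrace p a N (z ^ p) = relTrace p a N z ^ p := by
  simp only [relTrace_apply, sum_pow_char, pow_right_comm]

lemma relTrace_relTrace (a r N : ℕ) (z : K) :
    relTrace p a r (relTrace p (a * r) N z) = relTrace p a (r * N) z := by
  induction N with
  | zero => simp [relTrace]
  | succ N ih =>
    rw [relTrace_succ, map_add, ih, mul_add_one, relTrace_apply a (r * N + r), sum_range_add,
      ← relTrace_apply]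
    congr 1
    rw [relTrace_apply]
    refine sum_congr rfl fun k _ => ?_
    rw [← pow_mul, ← pow_add, mul_assoc, ← mul_add]

lemma relTrace_pow_eq_self {a N : ℕ} {z : K} (hz : z ^ p ^ (a * N) = z) :
    relTrace p a N z ^ p ^ a = relTrace p a N z := by
  cases N with
  | zero => simp [relTrace, zero_pow (expChar_pow_pos K p a).ne']
  | succ N =>
    have hstep (k : ℕ) : (z ^ p ^ (a * k)) ^ p ^ a = z ^ p ^ (a * (k + 1)) := by
      rw [← pow_mul, ← pow_add, mul_add_one]
    rw [relTrace_apply, sum_pow_char_pow, sum_congr rfl fun k _ => hstep k, sum_range_succ,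
      sum_range_succ' (fun k => z ^ p ^ (a * k)), hz, mul_zero, pow_zero, pow_one]

end RelTrace

lemma relTrace_relTrace_of_dvd {K : Type*} [CommSemiring K] {p : ℕ} [ExpChar K p] {m n e e' : ℕ}
    (hee' : e ∣ e') (he'n : e' ∣ n) (z : K) :
    relTrace p (e * m) (e' / e) (relTrace p (e' * m) (n / e') z) = relTrace p (e * m) (n / e) z := by
  obtain ⟨k, rfl⟩ := hee'
  obtain ⟨l, rfl⟩ := he'n
  rcases e.eq_zero_or_pos with rfl | he
  · simp [relTrace]
  rcases k.eq_zero_or_pos with rfl | hk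
  · simp [relTrace]
  rw [Nat.mul_div_cancel_left k he, Nat.mul_div_cancel_left l (by positivity), Nat.mul_assoc e k l,
    Nat.mul_div_cancel_left _ he, ← relTrace_relTrace, mul_right_comm e m k]

section FiniteField

variable {K : Type*} [CommSemiring K] {p m n : ℕ} [ExpChar K p]
  (hq : ∀ x : K, x ^ p ^ (n * m) = x)
include hq

lemma relTrace_pow_eq_self_of_dvd {e : ℕ} (he : e ∣ n) (z : K) :
    relTrace p (e * m) (n / e) z ^ p ^ (e * m) = relTrace p (e * m) (n / e) z :=
  relTrace_pow_eq_self (by rw [mul_right_comm, Nat.mul_div_cancel' he]; exact hq z)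

lemma relTrace_mul_relTrace_of_dvd {d e : ℕ} (hde : d ∣ e) (hen : e ∣ n) (z : K) :
    relTrace p (e * m) (n / e) (z * relTrace p (d * m) (n / d) z) =
      relTrace p (d * m) (n / d) z * relTrace p (e * m) (n / e) z := by
  have hfix := pow_pow_eq_self_of_dvd (relTrace_pow_eq_self_of_dvd hq (hde.trans hen) z)
    (mul_dvd_mul_right hde m)
  rw [mul_comm z, relTrace_mul_of_pow_eq_self hfix]

end FiniteField

section CharTwo

variable {K : Type*} [CommSemiring K] [CharP K 2] {m n : ℕ} (hq : ∀ x : K, x ^ 2 ^ (n * m) = x)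

lemma relTrace_of_odd {a N : ℕ} {z : K} (hz : z ^ 2 ^ a = z) (hN : Odd N) :
    relTrace 2 a N z = z := by
  rw [relTrace_of_pow_eq_self hz, nsmul_eq_mul,
    natCast_eq_one_of_odd_of_two_eq_zero hN CharTwo.two_eq_zero, one_mul]

include hq

lemma relTrace_mul_relTrace_eq_sq {d e : ℕ} (hed : e ∣ d) (hdn : d ∣ n) (z : K) :
    relTrace 2 (e * m) (n / e) (z * relTrace 2 (d * m) (n / d) z) =
      relTrace 2 (e * m) (n / e) z ^ 2 := by
  rw [← relTrace_relTrace_of_dvd hed hdn, relTrace_mul_relTrace_of_dvd hq dvd_rfl hdn, ← sq,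
    relTrace_pow_char, relTrace_relTrace_of_dvd hed hdn]

lemma relTrace_relTrace_of_dvd_of_odd (hn : Odd n) {d e : ℕ} (hde : d ∣ e) (hen : e ∣ n) (z : K) :
    relTrace 2 m e (relTrace 2 (d * m) (n / d) z) = relTrace 2 m n z := by
  have hodd : Odd (e / d) := hn.of_dvd_nat ((Nat.div_dvd_of_dvd hde).trans hen)
  have hfix : relTrace 2 (m * d) (e / d) (relTrace 2 (d * m) (n / d) z) =
      relTrace 2 (d * m) (n / d) z := by
    rw [mul_comm m d]
    exact relTrace_of_odd (relTrace_pow_eq_self_of_dvd hq (hde.trans hen) z) hodd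
  rw [← Nat.mul_div_cancel' hde, ← relTrace_relTrace, hfix, mul_comm d m, relTrace_relTrace,
    Nat.mul_div_cancel' (hde.trans hen)]

end CharTwo

section MultiTrace

variable {K : Type*} [Field K] [CharP K 2] {ι : Type*}

def traceCombination (m n : ℕ) (d : ι → ℕ) (c : ι → K) (s : Finset ι) (z : K) : K :=
  ∑ i ∈ s, c i * relTrace 2 (d i * m) (n / d i) z

def multiTracePoly [Fintype ι] (m n : ℕ) (d : ι → ℕ) (c : ι → K) (ct z : K) : K :=
  z * (traceCombination m n d c univ z + (∑ i, c i) * z) + ct * z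

variable {m n : ℕ} (hq : ∀ x : K, x ^ 2 ^ (n * m) = x) (hn : Odd n) {d : ι → ℕ}
  (hdn : ∀ i, d i ∣ n) {c : ι → K} (hc : ∀ i, c i ^ 2 ^ m = c i)
include hq hn hdn hc

omit hn in
lemma traceCombination_pow_eq_self {s : Finset ι} {e : ℕ} (hs : ∀ i ∈ s, d i ∣ e) (x : K) :
    traceCombination m n d c s x ^ 2 ^ (e * m) = traceCombination m n d c s x := by
  rw [traceCombination, sum_pow_char_pow]
  refine sum_congr rfl fun i hi => ?_
  rw [mul_pow, pow_pow_eq_self_of_dvd (hc i) (dvd_mul_left m e),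
    pow_pow_eq_self_of_dvd (relTrace_pow_eq_self_of_dvd hq (hdn i) x)
      (mul_dvd_mul_right (hs i hi) m)]

omit hdn in
lemma relTrace_traceCombination {s : Finset ι} {e : ℕ} (hs : ∀ i ∈ s, d i ∣ e) (hen : e ∣ n)
    (x : K) :
    relTrace 2 m e (traceCombination m n d c s x) = (∑ i ∈ s, c i) * relTrace 2 m n x := by
  rw [traceCombination, map_sum, sum_mul]
  refine sum_congr rfl fun i hi => ?_
  rw [relTrace_mul_of_pow_eq_self (hc i), relTrace_relTrace_of_dvd_of_odd hq hn (hs i hi) hen]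

lemma relTrace_eq_of_add_mul_eq_zero {s : Finset ι} {e₀ e : ℕ} (hs : ∀ i ∈ s, d i ∣ e₀)
    (he₀e : e₀ ∣ e) (hen : e ∣ n) {ct : K} (hct : ct ^ 2 ^ m = ct) (hct0 : ct ≠ 0) {x x' : K}
    (h₀ : relTrace 2 (e₀ * m) (n / e₀) x = relTrace 2 (e₀ * m) (n / e₀) x')
    (h : traceCombination m n d c s x + ct +
      (∑ i ∈ s, c i) * (relTrace 2 (e * m) (n / e) x + relTrace 2 (e * m) (n / e) x') = 0) :
    relTrace 2 (e * m) (n / e) x = relTrace 2 (e * m) (n / e) x' := by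
  have he₀n := he₀e.trans hen
  have hfixA : (traceCombination m n d c s x + ct) ^ 2 ^ (e₀ * m) =
      traceCombination m n d c s x + ct := by
    rw [add_pow_char_pow, traceCombination_pow_eq_self hq hdn hc hs,
      pow_pow_eq_self_of_dvd hct (dvd_mul_left m e₀)]
  have hfixC : (∑ i ∈ s, c i) ^ 2 ^ (e₀ * m) = ∑ i ∈ s, c i := by
    rw [sum_pow_char_pow]
    exact sum_congr rfl fun i _ => pow_pow_eq_self_of_dvd (hc i) (dvd_mul_left m e₀)
  have hA : traceCombination m n d c s x + ct = 0 := by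
    have h' := congrArg (relTrace 2 (e₀ * m) (e / e₀)) h
    rwa [map_add, map_zero,
      relTrace_of_odd hfixA (hn.of_dvd_nat ((Nat.div_dvd_of_dvd he₀e).trans hen)),
      relTrace_mul_of_pow_eq_self hfixC, map_add, relTrace_relTrace_of_dvd he₀e hen,
      relTrace_relTrace_of_dvd he₀e hen, h₀, CharTwo.add_self_eq_zero, mul_zero, add_zero] at h'
  have hC : ∑ i ∈ s, c i ≠ 0 := by
    intro hC
    have h' := congrArg (relTrace 2 m e₀) hA
    rw [map_add, relTrace_traceCombination hq hn hc hs he₀n, hC, zero_mul, zero_add,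
      relTrace_of_odd hct (hn.of_dvd_nat he₀n), map_zero] at h'
    exact hct0 h'
  rw [hA, zero_add, mul_eq_zero, or_iff_right hC] at h
  exact CharTwo.add_eq_zero.1 h

variable [Fintype ι]

lemma relTrace_multiTracePoly {e : ℕ} (hen : e ∣ n) (hcomp : ∀ i, d i ∣ e ∨ e ∣ d i) {ct : K}
    (hct : ct ^ 2 ^ m = ct) (z : K) :
    relTrace 2 (e * m) (n / e) (multiTracePoly m n d c ct z) =
      relTrace 2 (e * m) (n / e) z * (traceCombination m n d c (univ.filter (d · < e)) z + ct +
        (∑ i ∈ univ.filter (d · < e), c i) * relTrace 2 (e * m) (n / e) z) := by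
  have hfix {a : K} (ha : a ^ 2 ^ m = a) : a ^ 2 ^ (e * m) = a :=
    pow_pow_eq_self_of_dvd ha (dvd_mul_left m e)
  have hsum : (∑ i, c i) ^ 2 ^ m = ∑ i, c i := by
    rw [sum_pow_char_pow]; exact sum_congr rfl fun i _ => hc i
  have hterm (i : ι) : relTrace 2 (e * m) (n / e) (c i * (z * relTrace 2 (d i * m) (n / d i) z)) =
      if d i < e then c i * relTrace 2 (d i * m) (n / d i) z * relTrace 2 (e * m) (n / e) z
      else c i * relTrace 2 (e * m) (n / e) z ^ 2 := by
    rw [relTrace_mul_of_pow_eq_self (hfix (hc i))]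
    split_ifs with h
    · rw [relTrace_mul_relTrace_of_dvd hq (dvd_of_le_of_dvd_or_dvd
        (Nat.pos_of_dvd_of_pos (hdn i) hn.pos) h.le (hcomp i)) hen, mul_assoc]
    · rw [relTrace_mul_relTrace_eq_sq hq (dvd_of_le_of_dvd_or_dvd
        (Nat.pos_of_dvd_of_pos hen hn.pos) (not_lt.1 h) (hcomp i).symm) (hdn i)]
  have hexpand : multiTracePoly m n d c ct z =
      ∑ i, c i * (z * relTrace 2 (d i * m) (n / d i) z) + (∑ i, c i) * z ^ 2 + ct * z := by
    simp only [multiTracePoly, traceCombination, mul_add, mul_sum, mul_left_comm z]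
    ring
  rw [hexpand, map_add, map_add, map_sum, sum_congr rfl fun i _ => hterm i, sum_ite,
    relTrace_mul_of_pow_eq_self (hfix hsum), relTrace_mul_of_pow_eq_self (hfix hct),
    relTrace_pow_char, traceCombination, ← sum_filter_add_sum_filter_not univ (d · < e) c,
    ← sum_mul, ← sum_mul]
  linear_combination ((∑ i ∈ univ.filter (¬ d · < e), c i) * relTrace 2 (e * m) (n / e) z ^ 2) *
    CharTwo.two_eq_zero (R := K)

theorem multiTracePoly_injective (hcomp : ∀ i j, d i ∣ d j ∨ d j ∣ d i) {ct : K}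
    (hct : ct ^ 2 ^ m = ct) (hct0 : ct ≠ 0) : Function.Injective (multiTracePoly m n d c ct) := by
  intro x x' hxx'
  have hpos {e : ℕ} (he : e ∣ n) : 0 < e := Nat.pos_of_dvd_of_pos he hn.pos
  suffices key : ∀ e, e ∣ n → (∀ i, d i ∣ e ∨ e ∣ d i) →
      relTrace 2 (e * m) (n / e) x = relTrace 2 (e * m) (n / e) x' by
    simpa [Nat.div_self hn.pos, relTrace_one] using key n dvd_rfl fun i => .inl (hdn i)
  intro e
  induction e using Nat.strong_induction_on with
  | _ e IH =>
  intro hen hcompe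
  set L := univ.filter (d · < e)
  have hlow : traceCombination m n d c L x = traceCombination m n d c L x' :=
    sum_congr rfl fun i hi => by
      rw [IH (d i) (mem_filter.1 hi).2 (hdn i) fun j => hcomp j i]
  have hfac : (relTrace 2 (e * m) (n / e) x + relTrace 2 (e * m) (n / e) x') *
      (traceCombination m n d c L x + ct + (∑ i ∈ L, c i) *
        (relTrace 2 (e * m) (n / e) x + relTrace 2 (e * m) (n / e) x')) = 0 := by
    have h := congrArg (relTrace 2 (e * m) (n / e)) hxx'
    rw [relTrace_multiTracePoly hq hn hdn hc hen hcompe hct,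
      relTrace_multiTracePoly hq hn hdn hc hen hcompe hct, ← hlow] at h
    linear_combination h + (relTrace 2 (e * m) (n / e) x' * (traceCombination m n d c L x + ct) +
      (∑ i ∈ L, c i) * relTrace 2 (e * m) (n / e) x * relTrace 2 (e * m) (n / e) x' +
      (∑ i ∈ L, c i) * relTrace 2 (e * m) (n / e) x' ^ 2) * CharTwo.two_eq_zero (R := K)
  rcases mul_eq_zero.1 hfac with h | h
  · exact CharTwo.add_eq_zero.1 h
  rcases L.eq_empty_or_nonempty with hL | hL
  · simp [hL, traceCombination, hct0] at h
  obtain ⟨i₀, hi₀, hmax⟩ := exists_max_image L d hL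
  have hi₀e : d i₀ < e := (mem_filter.1 hi₀).2
  exact relTrace_eq_of_add_mul_eq_zero hq hn hdn hc
    (fun i hi => dvd_of_le_of_dvd_or_dvd (hpos (hdn i)) (hmax i hi) (hcomp i i₀))
    (dvd_of_le_of_dvd_or_dvd (hpos (hdn i₀)) hi₀e.le (hcompe i₀)) hen hct hct0
    (IH (d i₀) hi₀e (hdn i₀) fun j => hcomp j i₀) h

end MultiTrace

lemma Fin.dvd_of_le_of_forall_dvd_succ {s : ℕ} {d : Fin (s + 1) → ℕ}
    (hchain : ∀ i : Fin s, d i.castSucc ∣ d i.succ) {i j : Fin (s + 1)} (hij : i ≤ j) :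
    d i ∣ d j :=
  hij.eq_or_lt.elim (fun h => h ▸ dvd_rfl) fun h => (Fin.liftFun_iff_succ (· ∣ ·)).2 hchain h

/-- The relative traces appear as power sums and `c ∈ F_q` as `c ^ 2 ^ m = c`. -/
theorem stmt5_general {K : Type*} [Field K] [Fintype K] (m n s : ℕ)
    (hn : Odd n) (hK : Fintype.card K = 2 ^ (n * m))
    (d : Fin (s + 1) → ℕ)
    (hchain : ∀ i : Fin s, d i.castSucc ∣ d i.succ)
    (hdn : d (Fin.last s) ∣ n)
    (c : Fin (s + 1) → K) (hc : ∀ i, c i ^ 2 ^ m = c i)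
    (ct : K) (hctF : ct ^ 2 ^ m = ct) (hct0 : ct ≠ 0) (hct1 : ct ≠ 1) :
    IsCPP fun x : K =>
      x * ((∑ i, c i * ∑ k ∈ Finset.range (n / d i), x ^ 2 ^ (d i * m * k)) +
          (∑ i, c i) * x) +
        ct * x := by
  have : CharP K 2 := charP_of_card_eq_prime_pow hK
  have hq (x : K) : x ^ 2 ^ (n * m) = x := hK ▸ FiniteField.pow_card x
  have hdvd {i j} := Fin.dvd_of_le_of_forall_dvd_succ hchain (i := i) (j := j)
  have hbij {a : K} (ha : a ^ 2 ^ m = a) (ha0 : a ≠ 0) :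
      Function.Bijective (multiTracePoly m n d c a) :=
    Finite.injective_iff_bijective.1 <| multiTracePoly_injective hq hn
      (fun i => (hdvd (Fin.le_last i)).trans hdn) hc
      (fun i j => (le_total i j).imp hdvd hdvd) ha ha0
  have hF (a x : K) : multiTracePoly m n d c a x =
      x * ((∑ i, c i * ∑ k ∈ Finset.range (n / d i), x ^ 2 ^ (d i * m * k)) +
        (∑ i, c i) * x) + a * x := by
    simp only [multiTracePoly, traceCombination, relTrace_apply]
  have hshift : (fun x => multiTracePoly m n d c ct x + x) = multiTracePoly m n d c (ct + 1) := by
    funext x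
    simp only [multiTracePoly]
    ring
  simp only [IsCPP, ← hF, hshift]
  exact ⟨hbij hctF hct0, hbij (by rw [add_pow_char_pow, one_pow, hctF])
    fun h => hct1 (CharTwo.add_eq_zero.1 h)⟩

/-- Multi-trace construction: `K = F_{2^{nm}}`, relative traces realized as the
power-sum polynomials `x ↦ ∑_{k < n/d} x^{2^{d·m·k}}`, and membership of a
coefficient in the subfield `F_{2^e}` expressed by `c ^ 2^e = c`. -/
theorem stmt5 {K : Type*} [Field K] [Fintype K] (m n s : ℕ) (hm : 0 < m)
    (hn : Odd n) (hK : Fintype.card K = 2 ^ (n * m))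
    (d : Fin (s + 1) → ℕ) (hd0 : d 0 = 1) (hdpos : ∀ i, 0 < d i)
    (hdinj : Function.Injective d)
    (hchain : ∀ i : Fin s, d i.castSucc ∣ d i.succ)
    (hdn : d (Fin.last s) ∣ n)
    (c : Fin (s + 1) → K) (hc : ∀ i, c i ^ 2 ^ m = c i)
    (ct : K) (hctF : ct ^ 2 ^ m = ct) (hct0 : ct ≠ 0) (hct1 : ct ≠ 1) :
    IsCPP fun x : K =>
      x * ((∑ i, c i * ∑ k ∈ Finset.range (n / d i), x ^ 2 ^ (d i * m * k)) +
          (∑ i, c i) * x) +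
        ct * x :=
  stmt5_general m n s hn hK d hchain hdn c hc ct hctF hct0 hct1
end

section
/- Let m ≥ 2 with gcd(3, m) = 1, n = 3m, and v ∈ F_{2^{3m}}^* with Tr_m^{3m}(v) = 0. If v⁻¹·x^{2^{2m}+2^m+2} is a complete permutation polynomial over F_{2^{3m}}, then the monomial v·x^{2^{3m-1}+2^{3m-2}-2^{2m-2}-2^{m-2}} is also a complete permutation polynomial over F_{2^{3m}}. -/
theorem stmt6 {F K : Type*} [Field F] [Fintype F] [Field K] [Algebra F K]
    (m : ℕ) (hm : 2 ≤ m) (h3m : Nat.gcd 3 m = 1)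
    (hF : Fintype.card F = 2 ^ m) (hK : Module.finrank F K = 3)
    (v : K) (hv : v ≠ 0) (htr : Algebra.trace F K v = 0)
    (hcpp : IsCPP fun x : K => v⁻¹ * x ^ (2 ^ (2 * m) + 2 ^ m + 2)) :
    IsCPP fun x : K =>
      v * x ^ (2 ^ (3 * m - 1) + 2 ^ (3 * m - 2) - 2 ^ (2 * m - 2) - 2 ^ (m - 2)) := by
  haveI : FiniteDimensional F K := .of_finrank_pos (by rw [hK]; norm_num)
  haveI : Finite K := Module.finite_of_finite F
  haveI : Fintype K := Fintype.ofFinite K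
  set e := 2 ^ (2 * m) + 2 ^ m + 2 with he
  set d := 2 ^ (3 * m - 1) + 2 ^ (3 * m - 2) - 2 ^ (2 * m - 2) - 2 ^ (m - 2) with hd
  set a := 2 ^ (m - 2) with ha
  have ha1 : 1 ≤ a := Nat.one_le_two_pow
  -- card K
  have hcard : Fintype.card K = 64 * a ^ 3 := by
    rw [Module.card_eq_pow_finrank (K := F) (V := K), hF, hK, ha, ← pow_mul, ← pow_mul,
      show (64 : ℕ) = 2 ^ 6 from rfl, ← pow_add]
    congr 1; omega
  -- exponent identities
  have h2m : 2 ^ m = 4 * a := by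
    rw [ha, show (4 : ℕ) = 2 ^ 2 from rfl, ← pow_add]; congr 1; omega
  have h22m : 2 ^ (2 * m) = 16 * a ^ 2 := by
    rw [ha, ← pow_mul, show (16 : ℕ) = 2 ^ 4 from rfl, ← pow_add]; congr 1; omega
  have h2m2 : 2 ^ (2 * m - 2) = 4 * a ^ 2 := by
    rw [ha, ← pow_mul, show (4 : ℕ) = 2 ^ 2 from rfl, ← pow_add]; congr 1; omega
  have h3m1 : 2 ^ (3 * m - 1) = 32 * a ^ 3 := by
    rw [ha, ← pow_mul, show (32 : ℕ) = 2 ^ 5 from rfl, ← pow_add]; congr 1; omega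
  have h3m2 : 2 ^ (3 * m - 2) = 16 * a ^ 3 := by
    rw [ha, ← pow_mul, show (16 : ℕ) = 2 ^ 4 from rfl, ← pow_add]; congr 1; omega
  have hde : d * e = (12 * a ^ 2 + 2 * a + 1) * (Fintype.card K - 1) + 1 := by
    rw [hd, he, hcard, h2m, h22m, h2m2, h3m1, h3m2]
    have hle1 : 4 * a ^ 2 ≤ 32 * a ^ 3 + 16 * a ^ 3 := by nlinarith
    have hle2 : a ≤ 32 * a ^ 3 + 16 * a ^ 3 - 4 * a ^ 2 := by
      have : 4 * a ^ 2 + a ≤ 32 * a ^ 3 + 16 * a ^ 3 := by nlinarith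
      omega
    have hle3 : 1 ≤ 64 * a ^ 3 := by nlinarith
    zify [hle1, hle2, hle3]
    ring
  -- x ^ (d * e) = x, and x ^ (e * d) = x
  have hpow : ∀ x : K, x ^ (d * e) = x := by
    intro x
    rcases eq_or_ne x 0 with rfl | hx
    · rw [zero_pow]; omega
    · rw [hde, pow_add, pow_one, pow_mul', FiniteField.pow_card_sub_one_eq_one x hx,
        one_pow, one_mul]
  have hpow' : ∀ x : K, x ^ (e * d) = x := by
    intro x; rw [mul_comm]; exact hpow x
  -- x ↦ x ^ e and x ↦ x ^ d are mutually inverse bijections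
  have hbij_e : Function.Bijective fun x : K => x ^ e := by
    refine Function.bijective_iff_has_inverse.2 ⟨fun x => x ^ d, fun x => ?_, fun x => ?_⟩
    · simp only [← pow_mul]; exact hpow' x
    · simp only [← pow_mul]; exact hpow x
  have hbij_d : Function.Bijective fun x : K => x ^ d := by
    refine Function.bijective_iff_has_inverse.2 ⟨fun x => x ^ e, fun x => ?_, fun x => ?_⟩
    · simp only [← pow_mul]; exact hpow x
    · simp only [← pow_mul]; exact hpow' x
  have hmulv : Function.Bijective fun x : K => v * x := mulLeft_bijective₀ v hv
  constructor
  · exact hmulv.comp hbij_d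
  · -- (fun x => v * x ^ d + x) ∘ (fun u => u ^ e) = (v * ·) ∘ (fun u => v⁻¹ * u ^ e + u)
    have hcomp : ((fun x : K => v * x ^ d + x) ∘ fun u : K => u ^ e) =
        (fun x : K => v * x) ∘ fun u : K => v⁻¹ * u ^ e + u := by
      funext u
      simp only [Function.comp_apply, ← pow_mul]
      rw [hpow' u, mul_add, mul_inv_cancel_left₀ hv]
      ring
    have := (hmulv.comp hcpp.2)
    rw [← hcomp] at this
    exact (Function.Bijective.of_comp_iff _ hbij_e).mp this
end

section
/- For an integer m ≥ 2 with gcd(3, m) = 1, the integer 2^{2m}+2^m+2 is coprime to 2^{3m}-1, and the inverse of 2^{2m}+2^m+2 modulo 2^{3m}-1 is 2^{3m-1}+2^{3m-2}-2^{2m-2}-2^{m-2}. -/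
theorem stmt7 (m : ℕ) (hm : 2 ≤ m) (h : Nat.gcd 3 m = 1) :
    Nat.Coprime (2 ^ (2 * m) + 2 ^ m + 2) (2 ^ (3 * m) - 1) ∧
      (2 ^ (2 * m) + 2 ^ m + 2) *
          (2 ^ (3 * m - 1) + 2 ^ (3 * m - 2) - 2 ^ (2 * m - 2) - 2 ^ (m - 2)) ≡ 1
        [MOD 2 ^ (3 * m) - 1] := by
  obtain ⟨k, rfl⟩ : ∃ k, m = k + 2 := ⟨m - 2, by omega⟩
  have e1 : 2 * (k + 2) = 2 * k + 4 := by ring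
  have e2 : 3 * (k + 2) = 3 * k + 6 := by ring
  rw [e1, e2, show 3 * k + 6 - 1 = 3 * k + 5 by omega,
    show 3 * k + 6 - 2 = 3 * k + 4 by omega, show 2 * k + 4 - 2 = 2 * k + 2 by omega,
    show k + 2 - 2 = k by omega]
  have hk : 1 ≤ 2 ^ k := Nat.one_le_two_pow
  have key : (2 ^ (2 * k + 4) + 2 ^ (k + 2) + 2) *
      (2 ^ (3 * k + 5) + 2 ^ (3 * k + 4) - 2 ^ (2 * k + 2) - 2 ^ k)
      = 1 + (2 ^ (3 * k + 6) - 1) * (3 * 2 ^ (2 * k + 2) + 2 ^ (k + 1) + 1) := by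
    have h1 : 2 ^ (2 * k + 2) + 2 ^ k ≤ 2 ^ (3 * k + 5) + 2 ^ (3 * k + 4) := by
      have := Nat.pow_le_pow_right (by norm_num : 1 ≤ 2) (show 2 * k + 2 ≤ 3 * k + 4 by omega)
      have := Nat.pow_le_pow_right (by norm_num : 1 ≤ 2) (show k ≤ 3 * k + 5 by omega)
      omega
    have h2 : 1 ≤ 2 ^ (3 * k + 6) := Nat.one_le_two_pow
    zify [h2, show 2 ^ (2*k+2) ≤ 2 ^ (3*k+5) + 2 ^ (3*k+4) by omega,
      show 2 ^ k ≤ 2 ^ (3*k+5) + 2 ^ (3*k+4) - 2 ^ (2*k+2) by omega]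
    simp only [show 3*k+5 = k*3+5 by ring, show 3*k+4 = k*3+4 by ring,
      show 3*k+6 = k*3+6 by ring, show 2*k+2 = k*2+2 by ring,
      show 2*k+4 = k*2+4 by ring, pow_add, pow_mul]
    ring
  constructor
  · have hd : Nat.gcd (2 ^ (2 * k + 4) + 2 ^ (k + 2) + 2) (2 ^ (3 * k + 6) - 1) ∣ 1 := by
      have d1 : Nat.gcd (2 ^ (2 * k + 4) + 2 ^ (k + 2) + 2) (2 ^ (3 * k + 6) - 1) ∣
          (2 ^ (2 * k + 4) + 2 ^ (k + 2) + 2) *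
          (2 ^ (3 * k + 5) + 2 ^ (3 * k + 4) - 2 ^ (2 * k + 2) - 2 ^ k) :=
        (Nat.gcd_dvd_left _ _).mul_right _
      have d2 : Nat.gcd (2 ^ (2 * k + 4) + 2 ^ (k + 2) + 2) (2 ^ (3 * k + 6) - 1) ∣
          (2 ^ (3 * k + 6) - 1) * (3 * 2 ^ (2 * k + 2) + 2 ^ (k + 1) + 1) :=
        (Nat.gcd_dvd_right _ _).mul_right _
      have := Nat.dvd_sub d1 d2
      rwa [key, Nat.add_sub_cancel] at this
    exact Nat.dvd_one.mp hd
  · rw [key]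
    show _ % _ = _ % _
    rw [Nat.add_mul_mod_self_left]
end

section
/- For an odd integer m ≥ 3 with m ≡ 1 (mod 4), the inverse of 2^{m+1}+3 modulo 2^{2m}-1 is (2^{2m+1}-2^{m+1}+1)/5; for m ≡ 3 (mod 4), the inverse is (2^{2m}-2^{m+1}+2)/5. In particular, 5 divides 2^{2m+1}-2^{m+1}+1 when m ≡ 1 (mod 4) and 5 divides 2^{2m}-2^{m+1}+2 when m ≡ 3 (mod 4). -/
theorem stmt8 (m : ℕ) (hm : 3 ≤ m) (hodd : Odd m) :
    (m % 4 = 1 →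
      5 ∣ 2 ^ (2 * m + 1) - 2 ^ (m + 1) + 1 ∧
        (2 ^ (m + 1) + 3) * ((2 ^ (2 * m + 1) - 2 ^ (m + 1) + 1) / 5) ≡ 1
          [MOD 2 ^ (2 * m) - 1]) ∧
    (m % 4 = 3 →
      5 ∣ 2 ^ (2 * m) - 2 ^ (m + 1) + 2 ∧
        (2 ^ (m + 1) + 3) * ((2 ^ (2 * m) - 2 ^ (m + 1) + 2) / 5) ≡ 1
          [MOD 2 ^ (2 * m) - 1]) := by
  have h16 : (2 : ZMod 5) ^ 4 = 1 := by decide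
  have hN1 : (1:ℕ) ≤ 2 ^ (2 * m) := Nat.one_le_two_pow
  have hNcast : ((2 ^ (2 * m) - 1 : ℕ) : ℤ) = 2 ^ (2 * m) - 1 := by
    push_cast [hN1]; ring
  have hx2 : ((2:ℤ) ^ (m+1)) * ((2:ℤ) ^ (m+1)) = 4 * 2 ^ (2*m) := by
    rw [← pow_add]
    have h : m + 1 + (m + 1) = 2 + 2*m := by ring
    rw [h, pow_add]; norm_num
  have hNmod : ¬ (5 : ℕ) ∣ (2 ^ (2 * m) - 1) := by
    intro h
    have hz := (ZMod.natCast_eq_zero_iff _ 5).mpr h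
    rw [Nat.cast_sub hN1] at hz
    obtain ⟨j, hj⟩ := hodd
    push_cast at hz
    rw [show 2*m = 4*j+2 by omega, pow_add, pow_mul, h16, one_pow] at hz
    revert hz; decide
  have hco : IsCoprime ((2 ^ (2 * m) - 1 : ℕ) : ℤ) (5:ℤ) := by
    have : Nat.Coprime (2 ^ (2 * m) - 1) 5 :=
      Nat.coprime_comm.mp ((Nat.prime_five).coprime_iff_not_dvd.mpr hNmod)
    exact_mod_cast Nat.isCoprime_iff_coprime.mpr this
  constructor
  · intro h1
    obtain ⟨k, hk⟩ : ∃ k, m = 4*k+1 := ⟨m/4, by omega⟩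
    have hle : (2:ℕ) ^ (m+1) ≤ 2 ^ (2*m+1) :=
      Nat.pow_le_pow_right (by norm_num) (by omega)
    have hAcast : ((2 ^ (2 * m + 1) - 2 ^ (m + 1) + 1 : ℕ) : ℤ)
        = 2 ^ (2 * m + 1) - 2 ^ (m + 1) + 1 := by
      push_cast [hle]; ring
    have h5 : (5:ℕ) ∣ 2 ^ (2 * m + 1) - 2 ^ (m + 1) + 1 := by
      rw [← ZMod.natCast_eq_zero_iff]
      push_cast [hle]
      rw [show 2*m+1 = 4*(2*k)+3 by omega, show m+1 = 4*k+2 by omega,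
        pow_add, pow_add, pow_mul, pow_mul]
      simp [pow_mul, h16]
      decide
    refine ⟨h5, ?_⟩
    rw [Nat.ModEq.comm, Nat.modEq_iff_dvd]
    have hd : ((2 ^ (2 * m + 1) - 2 ^ (m + 1) + 1) / 5) * 5
        = 2 ^ (2 * m + 1) - 2 ^ (m + 1) + 1 := Nat.div_mul_cancel h5
    set d : ℕ := (2 ^ (2 * m + 1) - 2 ^ (m + 1) + 1) / 5 with hdd
    have hdZ : (d:ℤ) * 5 = 2 ^ (2 * m + 1) - 2 ^ (m + 1) + 1 := by
      rw [← hAcast]; exact_mod_cast hd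
    have key : ((2 ^ (2 * m) - 1 : ℕ) : ℤ) ∣
        (((2 ^ (m + 1) + 3) * d : ℕ) - (1:ℕ)) * 5 := by
      refine ⟨2 * (2 ^ (m+1) + 1), ?_⟩
      rw [hNcast]
      push_cast
      linear_combination (2^(m+1) + 3 : ℤ) * hdZ - hx2
    exact hco.dvd_of_dvd_mul_right key
  · intro h3
    obtain ⟨k, hk⟩ : ∃ k, m = 4*k+3 := ⟨m/4, by omega⟩
    have hle : (2:ℕ) ^ (m+1) ≤ 2 ^ (2*m) :=
      Nat.pow_le_pow_right (by norm_num) (by omega)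
    have hAcast : ((2 ^ (2 * m) - 2 ^ (m + 1) + 2 : ℕ) : ℤ)
        = 2 ^ (2 * m) - 2 ^ (m + 1) + 2 := by
      push_cast [hle]; ring
    have h5 : (5:ℕ) ∣ 2 ^ (2 * m) - 2 ^ (m + 1) + 2 := by
      rw [← ZMod.natCast_eq_zero_iff]
      push_cast [hle]
      rw [show 2*m = 4*(2*k+1)+2 by omega, show m+1 = 4*(k+1) by omega,
        pow_add, pow_mul, pow_mul]
      simp [pow_mul, h16]
      decide
    refine ⟨h5, ?_⟩
    rw [Nat.ModEq.comm, Nat.modEq_iff_dvd]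
    have hd : ((2 ^ (2 * m) - 2 ^ (m + 1) + 2) / 5) * 5
        = 2 ^ (2 * m) - 2 ^ (m + 1) + 2 := Nat.div_mul_cancel h5
    set d : ℕ := (2 ^ (2 * m) - 2 ^ (m + 1) + 2) / 5 with hdd
    have hdZ : (d:ℤ) * 5 = 2 ^ (2 * m) - 2 ^ (m + 1) + 2 := by
      rw [← hAcast]; exact_mod_cast hd
    have key : ((2 ^ (2 * m) - 1 : ℕ) : ℤ) ∣
        (((2 ^ (m + 1) + 3) * d : ℕ) - (1:ℕ)) * 5 := by
      refine ⟨(2 ^ (m+1) - 1), ?_⟩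
      rw [hNcast]
      push_cast
      linear_combination (2^(m+1) + 3 : ℤ) * hdZ - hx2
    exact hco.dvd_of_dvd_mul_right key
end

section
/- For an odd integer m ≥ 3, the inverse of 2^{m-2}·(2^m+3) modulo 2^{2m}-1 is 2^{2m-1}+2^m+2^{m-1}-1. -/
lemma key (n : ℕ) :
    (2 ^ (n + 1) * (2 ^ (n + 3) + 3)) * (2 ^ (2 * n + 5) + 2 ^ (n + 3) + 2 ^ (n + 2) - 1)
      ≡ 1 [MOD 2 ^ (2 * n + 6) - 1] := by
  rw [Nat.ModEq.comm, Nat.modEq_iff_dvd]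
  have p1 : (1 : ℕ) ≤ 2 ^ (2 * n + 5) := Nat.one_le_two_pow
  have h1 : (1 : ℕ) ≤ 2 ^ (2 * n + 5) + 2 ^ (n + 3) + 2 ^ (n + 2) :=
    p1.trans ((Nat.le_add_right _ _).trans (Nat.le_add_right _ _))
  have h2 : (1 : ℕ) ≤ 2 ^ (2 * n + 6) := Nat.one_le_two_pow
  push_cast [h1, h2]
  refine ⟨2 ^ (2 * n + 3) + 3 * 2 ^ (n + 1) + 1, ?_⟩
  have hx : ∀ k : ℕ, ((2 : ℤ)) ^ (2 * n + k) = 2 ^ n * 2 ^ n * 2 ^ k := by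
    intro k; rw [pow_add, two_mul, pow_add]
  rw [hx, hx, hx]
  ring

theorem stmt9 (m : ℕ) (hm : 3 ≤ m) (hodd : Odd m) :
    Nat.Coprime (2 ^ (m - 2) * (2 ^ m + 3)) (2 ^ (2 * m) - 1) ∧
      2 ^ (m - 2) * (2 ^ m + 3) * (2 ^ (2 * m - 1) + 2 ^ m + 2 ^ (m - 1) - 1) ≡ 1
        [MOD 2 ^ (2 * m) - 1] := by
  obtain ⟨n, rfl⟩ : ∃ n, m = n + 3 := ⟨m - 3, by omega⟩
  have e1 : n + 3 - 2 = n + 1 := by omega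
  have e2 : 2 * (n + 3) = 2 * n + 6 := by omega
  have e3 : 2 * (n + 3) - 1 = 2 * n + 5 := by omega
  have e4 : n + 3 - 1 = n + 2 := by omega
  rw [e1, e3, e4, e2]
  have hmod := key n
  refine ⟨?_, hmod⟩
  set a := 2 ^ (n + 1) * (2 ^ (n + 3) + 3) with ha
  set b := 2 ^ (2 * n + 5) + 2 ^ (n + 3) + 2 ^ (n + 2) - 1 with hb
  set N := 2 ^ (2 * n + 6) - 1 with hN
  have hd : Nat.gcd a N ∣ 1 := by
    have h1 : Nat.gcd a N ∣ a * b := Dvd.dvd.mul_right (Nat.gcd_dvd_left a N) b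
    have h2 : Nat.gcd a N ∣ N := Nat.gcd_dvd_right a N
    have h4 : 1 ≤ a * b := by
      rcases Nat.eq_zero_or_pos (a * b) with h | h
      · exfalso
        have : (0 : ℕ) ≡ 1 [MOD N] := h ▸ hmod
        have hN1 : 1 < N := by
          have : (2:ℕ)^6 ≤ 2 ^ (2*n+6) := Nat.pow_le_pow_right (by norm_num) (by omega)
          omega
        have := (Nat.modEq_iff_dvd' (by norm_num)).mp this
        simp at this; omega
      · exact h
    have h3 : N ∣ a * b - 1 := (Nat.modEq_iff_dvd' h4).mp hmod.symm
    have := Nat.dvd_sub h1 (h2.trans h3)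
    simpa [Nat.sub_sub_self h4] using this
  exact Nat.eq_one_of_dvd_one hd
end

section
/- Let q = 2^m, n odd, L a linearized polynomial over F_q such that x·L(x)+v·x is a complete permutation polynomial over F_q for some v ∈ F_q\{0,1\}, and let g be the compositional inverse of x·L(x)+v·x on F_q. Then F̄(x) = x/v + (g(Tr(x))/Tr(x) + 1/v)·x·Tr(x)^{q-1} is a complete permutation polynomial over F_{q^n}, where Tr is the trace from F_{q^n} to F_q and expressions like g(Tr(x))/Tr(x) are interpreted via Tr(x)^{q-2} (so equal to 0 when Tr(x)=0). -/
theorem stmt11 {F K : Type*} [Field F] [Fintype F] [Field K] [Algebra F K]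
    (m n : ℕ) (hm : 0 < m) (hn : Odd n)
    (hF : Fintype.card F = 2 ^ m) (hK : Module.finrank F K = n)
    (L : F → F) (a : Fin m → F) (hL : ∀ x, L x = ∑ i, a i * x ^ (2 ^ (i : ℕ)))
    (v : F) (hv0 : v ≠ 0) (hv1 : v ≠ 1)
    (hcpp : IsCPP fun x => x * L x + v * x)
    (g : F → F) (hg : ∀ y, g (y * L y + v * y) = y) :
    IsCPP fun x : K =>
      algebraMap F K v⁻¹ * x +
        algebraMap F K (g (Algebra.trace F K x) * (Algebra.trace F K x) ^ (2 ^ m - 2) + v⁻¹) *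
          x * algebraMap F K ((Algebra.trace F K x) ^ (2 ^ m - 1)) := by
  classical
  have hnpos : 0 < n := hn.pos
  haveI : FiniteDimensional F K := FiniteDimensional.of_finrank_pos (by rw [hK]; exact hnpos)
  haveI : Finite K := Module.finite_of_finite F
  have h2m : 2 ≤ 2 ^ m := by
    calc 2 = 2 ^ 1 := rfl
    _ ≤ 2 ^ m := Nat.pow_le_pow_right (by norm_num) hm
  -- characteristic 2
  have h2F : (2 : F) = 0 := by
    have h := FiniteField.cast_card_eq_zero F
    rw [hF] at h
    push_cast at h
    exact pow_eq_zero_iff (by omega) |>.mp h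
  have haddF : ∀ x : F, x + x = 0 := fun x => by
    have h : x + x = 2 * x := by ring
    rw [h, h2F, zero_mul]
  set A := algebraMap F K with hA
  set T := Algebra.trace F K with hT
  have hAinj : Function.Injective A := (algebraMap F K).injective
  have hAne : ∀ c : F, c ≠ 0 → A c ≠ 0 := by
    intro c hc h
    exact hc (hAinj (by rw [h, map_zero]))
  -- trace of scalar multiple
  have hTs : ∀ (c : F) (x : K), T (A c * x) = c * T x := by
    intro c x
    rw [← Algebra.smul_def, map_smul, smul_eq_mul]
  -- facts about g
  have hg0 : g 0 = 0 := by
    have h := hg 0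
    have h0 : (0 : F) * L 0 + v * 0 = 0 := by ring
    rwa [h0] at h
  have hginj : Function.Injective g := by
    intro p q hpq
    obtain ⟨x, hx⟩ := hcpp.1.2 p
    obtain ⟨y, hy⟩ := hcpp.1.2 q
    simp only at hx hy
    rw [← hx, ← hy, hg, hg] at hpq
    rw [← hx, ← hy, hpq]
  have hPg : ∀ t, g t * L (g t) + v * g t = t := by
    intro t
    obtain ⟨x, hx⟩ := hcpp.1.2 t
    simp only at hx
    rw [← hx, hg]
  have hGT : ∀ p q : F, g p + p = g q + q → p = q := by
    intro p q hpq
    obtain ⟨x, hx⟩ := hcpp.1.2 p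
    obtain ⟨y, hy⟩ := hcpp.1.2 q
    simp only at hx hy
    rw [← hx, ← hy, hg, hg] at hpq
    have := hcpp.2.1 (a₁ := x) (a₂ := y) (by
      simp only
      rw [hx, hy]
      linear_combination hpq - hx + hy)
    rw [← hx, ← hy, this]
  -- power facts
  have hpow1 : ∀ t : F, t ≠ 0 → t ^ (2 ^ m - 1) = 1 := by
    intro t ht
    rw [← hF]
    exact FiniteField.pow_card_sub_one_eq_one t ht
  have hpow2 : ∀ t : F, t ≠ 0 → t ^ (2 ^ m - 2) * t = 1 := by
    intro t ht
    rw [← pow_succ]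
    have h : 2 ^ m - 2 + 1 = 2 ^ m - 1 := by omega
    rw [h]
    exact hpow1 t ht
  -- the coefficient function
  set c : K → F := fun x => if T x = 0 then v⁻¹ else g (T x) * (T x) ^ (2 ^ m - 2) with hc
  set f : K → K := fun x : K =>
      A v⁻¹ * x +
        A (g (T x) * (T x) ^ (2 ^ m - 2) + v⁻¹) *
          x * A ((T x) ^ (2 ^ m - 1)) with hfdef
  have hfc : ∀ x, f x = A (c x) * x := by
    intro x
    by_cases ht : T x = 0
    · simp only [hfdef, hc, ht, if_pos, zero_pow (show 2 ^ m - 1 ≠ 0 by omega), map_zero,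
        mul_zero, add_zero, if_true]
    · simp only [hfdef, hc, ht, if_false, hpow1 _ ht, map_one, mul_one, if_neg ht]
      rw [← add_mul, ← map_add]
      congr 1
      apply congrArg
      linear_combination haddF v⁻¹
  have hcne : ∀ x, c x ≠ 0 := by
    intro x
    by_cases ht : T x = 0
    · simp only [hc, ht, if_pos]
      exact inv_ne_zero hv0
    · simp only [hc, if_neg ht]
      have hgt : g (T x) ≠ 0 := fun h => ht (hginj (h.trans hg0.symm))
      exact mul_ne_zero hgt (pow_ne_zero _ ht)
  have hcT : ∀ x, c x * T x = g (T x) := by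
    intro x
    by_cases ht : T x = 0
    · rw [ht, mul_zero, hg0]
    · simp only [hc, if_neg ht]
      rw [mul_assoc, hpow2 _ ht, mul_one]
  have hTf : ∀ x, T (f x) = g (T x) := by
    intro x
    rw [hfc, hTs, hcT]
  -- c x ≠ 1
  have hcne1 : ∀ x, c x ≠ 1 := by
    intro x
    by_cases ht : T x = 0
    · simp only [hc, ht, if_pos]
      intro h
      exact hv1 (by rwa [inv_eq_one] at h)
    · simp only [hc, if_neg ht]
      intro h
      have hgt : g (T x) = T x := by
        have := congrArg (· * T x) h
        simp only [one_mul] at this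
        rwa [mul_assoc, hpow2 _ ht, mul_one] at this
      have hP : T x * L (T x) + v * T x = T x := by
        have := hPg (T x); rwa [hgt] at this
      have h0 : (fun z => (fun z => z * L z + v * z) z + z) (T x)
          = (fun z => (fun z => z * L z + v * z) z + z) 0 := by
        simp only
        rw [hP]
        linear_combination haddF (T x) - hP + hP
      exact ht (hcpp.2.1 h0)
  have hcne1' : ∀ x, c x + 1 ≠ 0 := by
    intro x h
    exact hcne1 x (by linear_combination h - haddF 1)
  -- f x + x
  have hfcx : ∀ x, f x + x = A (c x + 1) * x := by
    intro x
    rw [hfc, map_add, map_one, add_mul, one_mul]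
  constructor
  · rw [← Finite.injective_iff_bijective]
    intro x y hxy
    have hxy' : f x = f y := hxy
    have ht : T x = T y := hginj (by rw [← hTf, ← hTf, hxy'])
    have hcc : c x = c y := by simp only [hc, ht]
    rw [hfc, hfc, hcc] at hxy'
    exact mul_left_cancel₀ (hAne _ (hcne y)) hxy'
  · rw [← Finite.injective_iff_bijective]
    intro x y hxy
    have hxy' : f x + x = f y + y := hxy
    have ht : T x = T y := by
      apply hGT
      have e1 : T (f x + x) = g (T x) + T x := by rw [map_add, hTf]
      have e2 : T (f y + y) = g (T y) + T y := by rw [map_add, hTf]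
      rw [← e1, ← e2, hxy']
    have hcc : c x = c y := by simp only [hc, ht]
    rw [hfcx, hfcx, hcc] at hxy'
    exact mul_left_cancel₀ (hAne _ (hcne1' y)) hxy'
end

section
/- Let q = 2^m, n odd, v ∈ F_q \ {0,1}, and F(x) = x·L(Tr(x)) + v·x with L as above permuting appropriately (the case u = 0 of the recursive construction). Then the compositional inverse of F on F_{q^n} is given by F⁻¹(X) = X/v when Tr(X) = 0, and F⁻¹(X) = X·g(Tr(X))/Tr(X) when Tr(X) ≠ 0, where g is the compositional inverse of y ↦ y·L(y)+v·y on F_q. -/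
open scoped Classical

theorem stmt12 {F K : Type*} [Field F] [Fintype F] [Field K] [Algebra F K]
    (m n : ℕ) (hm : 0 < m) (hn : Odd n)
    (hF : Fintype.card F = 2 ^ m) (hK : Module.finrank F K = n)
    (L : F → F) (a : Fin m → F) (hL : ∀ x, L x = ∑ i, a i * x ^ (2 ^ (i : ℕ)))
    (v : F) (hv0 : v ≠ 0) (hv1 : v ≠ 1)
    (hperm : Function.Bijective fun y : F => y * L y + v * y)
    (g : F → F) (hg : ∀ y, g (y * L y + v * y) = y) :
    ∀ X : K,
      (fun x : K => x * (algebraMap F K (L (Algebra.trace F K x)) + algebraMap F K v))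
          (if Algebra.trace F K X = 0 then (algebraMap F K v)⁻¹ * X
            else X * algebraMap F K (g (Algebra.trace F K X)) *
              (algebraMap F K (Algebra.trace F K X))⁻¹) = X ∧
      (if Algebra.trace F K
            (X * (algebraMap F K (L (Algebra.trace F K X)) + algebraMap F K v)) = 0 then
          (algebraMap F K v)⁻¹ *
            (X * (algebraMap F K (L (Algebra.trace F K X)) + algebraMap F K v))
        else
          X * (algebraMap F K (L (Algebra.trace F K X)) + algebraMap F K v) *
            algebraMap F K (g (Algebra.trace F K
              (X * (algebraMap F K (L (Algebra.trace F K X)) + algebraMap F K v)))) *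
            (algebraMap F K (Algebra.trace F K
              (X * (algebraMap F K (L (Algebra.trace F K X)) + algebraMap F K v))))⁻¹) = X := by
  have hL0 : L 0 = 0 := by
    rw [hL]
    apply Finset.sum_eq_zero
    intro i _
    rw [zero_pow (by positivity), mul_zero]
  have hg' : ∀ z : F, g z * L (g z) + v * g z = z := by
    intro z
    obtain ⟨y, hy⟩ := hperm.2 z
    simp only at hy
    rw [← hy, hg]
  have hinj := (algebraMap F K).injective
  have htr : ∀ (c : F) (x : K),
      Algebra.trace F K (algebraMap F K c * x) = c * Algebra.trace F K x := by
    intro c x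
    rw [← Algebra.smul_def, map_smul, smul_eq_mul]
  have hvK : algebraMap F K v ≠ 0 := fun h => hv0 (hinj (by simpa using h))
  intro X
  set t := Algebra.trace F K X with ht
  have hS : Algebra.trace F K (X * (algebraMap F K (L t) + algebraMap F K v))
      = t * L t + v * t := by
    rw [← map_add, mul_comm, htr]
    ring
  by_cases h0 : t = 0
  · constructor
    · rw [if_pos h0]
      have h1 : Algebra.trace F K ((algebraMap F K v)⁻¹ * X) = 0 := by
        rw [← map_inv₀, htr, ← ht, h0, mul_zero]
      simp only [h1, hL0, map_zero, zero_add]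
      field_simp
    · rw [hS, h0, hL0]
      rw [show (0 : F) * 0 + v * 0 = 0 by ring, if_pos rfl, map_zero, zero_add]
      field_simp
  · have htK : algebraMap F K t ≠ 0 := fun h => h0 (hinj (by simpa using h))
    have hs0 : t * L t + v * t ≠ 0 := by
      intro h
      apply h0
      apply hperm.1
      simp only [h]
      ring
    constructor
    · rw [if_neg h0]
      have h1 : Algebra.trace F K (X * algebraMap F K (g t) * (algebraMap F K t)⁻¹)
          = g t := by
        rw [show X * algebraMap F K (g t) * (algebraMap F K t)⁻¹
            = algebraMap F K (g t * t⁻¹) * X from by rw [map_mul, map_inv₀]; ring,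
          htr, ← ht]
        field_simp
      simp only [h1]
      have key : algebraMap F K (g t) * (algebraMap F K (L (g t)) + algebraMap F K v)
          = algebraMap F K t := by
        rw [← map_add, ← map_mul]
        congr 1
        linear_combination hg' t
      rw [show X * algebraMap F K (g t) * (algebraMap F K t)⁻¹ *
          (algebraMap F K (L (g t)) + algebraMap F K v)
          = X * (algebraMap F K (g t) * (algebraMap F K (L (g t)) + algebraMap F K v)) *
            (algebraMap F K t)⁻¹ from by ring, key, mul_inv_cancel_right₀ htK]
    · rw [hS, if_neg hs0, hg]
      have hsK : algebraMap F K (t * L t + v * t) ≠ 0 :=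
        fun h => hs0 (hinj (by simpa using h))
      have key : X * (algebraMap F K (L t) + algebraMap F K v) * algebraMap F K t
          = X * algebraMap F K (t * L t + v * t) := by
        rw [← map_add (algebraMap F K) (L t) v, mul_assoc, ← map_mul]
        congr 1
        ring
      rw [key, mul_inv_cancel_right₀ hsK]
end

section
/- Let q = 2^m, n odd, and a, b ∈ F_q with a ≠ 0. For any Z ∈ F_{q^n} with Tr(Z) = 0, the element z = Σ_{j=0}^{m-1} (b/a)^{-(2^{j+1}-1)} · Σ_{k=0}^{(n-1)/2} (Z/a)^{2^{2km+j}} satisfies a·z² + b·z = Z, provided b ≠ 0. -/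
/-!
Put `c = b/a` and `W = Z/a`, so that the equation becomes `z² + c z = W`. In characteristic 2,
`z = ∑_{j<m} c^{-(2^{j+1}-1)} x^{2^j}` satisfies `z² + c z = c^{2-2^{m+1}} x^{2^m} + x` by
telescoping, and `c^{2^m-1} = 1` since `c ∈ 𝔽_q`; so it remains to find `x` with `x^q + x = W`.
For `n` odd, `x = ∑_{k ≤ (n-1)/2} W^{q^{2k}}` works:
`x^q + x = ∑_{i ≤ n} W^{q^i} = Tr(W) + W^{q^n} = W`.
-/

open Finset

theorem Finset.sum_range_two_mul {M : Type*} [AddCommMonoid M] (f : ℕ → M) (N : ℕ) :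
    ∑ i ∈ range (2 * N), f i =
      ∑ k ∈ range N, f (2 * k) + ∑ k ∈ range N, f (2 * k + 1) := by
  induction N with
  | zero => simp
  | succ N ih =>
    rw [show 2 * (N + 1) = 2 * N + 1 + 1 by ring, sum_range_succ, sum_range_succ, ih,
      sum_range_succ, sum_range_succ]
    abel

theorem pow_two_pow_succ_sub_one {M : Type*} [Monoid M] (y : M) (j : ℕ) :
    y ^ (2 ^ (j + 1) - 1) = y * (y ^ (2 ^ j - 1)) ^ 2 := by
  rw [← pow_mul, ← pow_succ']
  have := Nat.one_le_two_pow (n := j)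
  congr 1
  rw [pow_succ]
  omega

theorem charP_two_of_card_eq_two_pow {F : Type*} [Field F] [Fintype F] {m : ℕ}
    (hF : Fintype.card F = 2 ^ m) : CharP F 2 := by
  have h : ((2 ^ m : ℕ) : F) = 0 := hF ▸ FiniteField.cast_card_eq_zero F
  push_cast at h
  exact CharTwo.of_one_ne_zero_of_two_eq_zero one_ne_zero (eq_zero_of_pow_eq_zero h)

theorem sq_add_mul_eq_of_eq_sum {K : Type*} [Field K] [CharP K 2] {c x z : K} (hc : c ≠ 0)
    (m : ℕ) (hz : z = ∑ j ∈ range m, c⁻¹ ^ (2 ^ (j + 1) - 1) * x ^ 2 ^ j) :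
    z ^ 2 + c * z = (c⁻¹ ^ (2 ^ m - 1)) ^ 2 * x ^ 2 ^ m + x := by
  set g : ℕ → K := fun j => (c⁻¹ ^ (2 ^ j - 1)) ^ 2 * x ^ 2 ^ j with hg
  have hsq : z ^ 2 = ∑ j ∈ range m, g (j + 1) := by
    rw [hz, sum_pow_char]
    refine sum_congr rfl fun j _ => ?_
    rw [mul_pow, ← pow_mul x, ← pow_succ]
  have hmul : c * z = ∑ j ∈ range m, g j := by
    rw [hz, mul_sum]
    refine sum_congr rfl fun j _ => ?_
    rw [pow_two_pow_succ_sub_one, ← mul_assoc, ← mul_assoc, mul_inv_cancel₀ hc, one_mul]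
  have htel : ∑ j ∈ range m, (g (j + 1) + g j) = g m + g 0 := by
    simpa only [CharTwo.sub_eq_add] using sum_range_sub g m
  have hg0 : g 0 = x := by simp [hg]
  rw [hsq, hmul, ← sum_add_distrib, htel, hg0]

theorem FiniteField.pow_card_add_eq_of_trace_eq_zero {F K : Type*} [Field F] [Fintype F] [Field K]
    [Fintype K] [Algebra F K] (hn : Odd (Module.finrank F K)) {W x : K}
    (hW : Algebra.trace F K W = 0)
    (hx : x = ∑ k ∈ range ((Module.finrank F K - 1) / 2 + 1), W ^ Fintype.card F ^ (2 * k)) :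
    x ^ Fintype.card F + x = W := by
  set n := Module.finrank F K
  set q := Fintype.card F
  have hxq : x ^ q = ∑ k ∈ range ((n - 1) / 2 + 1), W ^ q ^ (2 * k + 1) := by
    rw [hx]
    refine (map_sum (frobeniusAlgHom F K) _ _).trans (sum_congr rfl fun k _ => ?_)
    rw [frobeniusAlgHom_apply, ← pow_mul, ← pow_succ]
  have htrace : ∑ i ∈ range n, W ^ q ^ i = 0 := by
    have := algebraMap_trace_eq_sum_pow F K W
    rwa [hW, map_zero, Nat.card_eq_fintype_card, eq_comm] at this
  have hWn : W ^ q ^ n = W := by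
    rw [← Module.card_eq_pow_finrank, pow_card]
  have hN : 2 * ((n - 1) / 2 + 1) = n + 1 := by
    obtain ⟨t, ht⟩ := hn
    omega
  rw [hxq, hx, add_comm, ← sum_range_two_mul (fun i => W ^ q ^ i), hN, sum_range_succ, htrace,
    zero_add, hWn]

theorem stmt15_general {F K : Type*} [Field F] [Fintype F] [Field K] [Algebra F K]
    (m n : ℕ) (hn : Odd n)
    (hF : Fintype.card F = 2 ^ m) (hK : Module.finrank F K = n)
    (a b : F) (ha : a ≠ 0) (hb : b ≠ 0)
    (Z : K) (hZ : Algebra.trace F K Z = 0) :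
    algebraMap F K a *
        (∑ j ∈ Finset.range m,
            ((algebraMap F K b / algebraMap F K a)⁻¹) ^ (2 ^ (j + 1) - 1) *
              ∑ k ∈ Finset.range ((n - 1) / 2 + 1),
                (Z / algebraMap F K a) ^ 2 ^ (2 * k * m + j)) ^ 2 +
      algebraMap F K b *
        (∑ j ∈ Finset.range m,
            ((algebraMap F K b / algebraMap F K a)⁻¹) ^ (2 ^ (j + 1) - 1) *
              ∑ k ∈ Finset.range ((n - 1) / 2 + 1),
                (Z / algebraMap F K a) ^ 2 ^ (2 * k * m + j)) = Z := by
  have : FiniteDimensional F K := .of_finrank_pos (hK ▸ hn.pos)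
  have : Finite K := Module.finite_of_finite F
  have := Fintype.ofFinite K
  have := charP_two_of_card_eq_two_pow hF
  have : CharP K 2 := charP_of_injective_algebraMap (algebraMap F K).injective 2
  have hA : algebraMap F K a ≠ 0 := by simpa using ha
  set c := algebraMap F K b / algebraMap F K a with hc
  set W := Z / algebraMap F K a
  set x := ∑ k ∈ range ((n - 1) / 2 + 1), W ^ (2 ^ m) ^ (2 * k)
  have hc1 : c ^ (2 ^ m - 1) = 1 := by
    rw [hc, ← map_div₀, ← map_pow, ← hF,
      FiniteField.pow_card_sub_one_eq_one _ (div_ne_zero hb ha), map_one]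
  have hW : Algebra.trace F K W = 0 := by
    simp [W, div_eq_inv_mul, ← map_inv₀, ← Algebra.smul_def, hZ]
  have hx : x ^ 2 ^ m + x = W := by
    have := FiniteField.pow_card_add_eq_of_trace_eq_zero (hK ▸ hn) hW rfl
    rwa [hF, hK] at this
  set z := ∑ j ∈ range m, c⁻¹ ^ (2 ^ (j + 1) - 1) *
    ∑ k ∈ range ((n - 1) / 2 + 1), W ^ 2 ^ (2 * k * m + j)
  have hz : z = ∑ j ∈ range m, c⁻¹ ^ (2 ^ (j + 1) - 1) * x ^ 2 ^ j := by
    refine sum_congr rfl fun j _ => congrArg _ ?_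
    rw [sum_pow_char_pow]
    refine sum_congr rfl fun k _ => ?_
    rw [← pow_mul]
    ring_nf
  have hzW := sq_add_mul_eq_of_eq_sum (by simp [c, ha, hb]) m hz
  rw [inv_pow, hc1, inv_one, one_pow, one_mul, hx] at hzW
  calc algebraMap F K a * z ^ 2 + algebraMap F K b * z
      = algebraMap F K a * (z ^ 2 + c * z) := by rw [hc]; field_simp
    _ = Z := by rw [hzW]; exact mul_div_cancel₀ Z hA

theorem stmt15 {F K : Type*} [Field F] [Fintype F] [Field K] [Algebra F K]
    (m n : ℕ) (hm : 0 < m) (hn : Odd n)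
    (hF : Fintype.card F = 2 ^ m) (hK : Module.finrank F K = n)
    (a b : F) (ha : a ≠ 0) (hb : b ≠ 0)
    (Z : K) (hZ : Algebra.trace F K Z = 0) :
    algebraMap F K a *
        (∑ j ∈ Finset.range m,
            ((algebraMap F K b / algebraMap F K a)⁻¹) ^ (2 ^ (j + 1) - 1) *
              ∑ k ∈ Finset.range ((n - 1) / 2 + 1),
                (Z / algebraMap F K a) ^ 2 ^ (2 * k * m + j)) ^ 2 +
      algebraMap F K b *
        (∑ j ∈ Finset.range m,
            ((algebraMap F K b / algebraMap F K a)⁻¹) ^ (2 ^ (j + 1) - 1) *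
              ∑ k ∈ Finset.range ((n - 1) / 2 + 1),
                (Z / algebraMap F K a) ^ 2 ^ (2 * k * m + j)) = Z :=
  stmt15_general m n hn hF hK a b ha hb Z hZ
end

section
/- Let q = 2^m. For Y ∈ F_q^*, g(Y) ∈ F_q^* and u ∈ F_q^* with Y/(u^{1/2}g(Y)) + u^{1/2}g(Y) ≠ 0, one has Σ_{j=0}^{m-1} (Y/(u^{1/2}g(Y)) + u^{1/2}g(Y))^{-(2^{j+1}-1)} · Y^{2^j} = 0. -/
theorem stmt16 {F : Type*} [Field F] [Fintype F] (m : ℕ) (hm : 0 < m)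
    (hF : Fintype.card F = 2 ^ m)
    (Y G u : F) (hY : Y ≠ 0) (hG : G ≠ 0) (hu : u ≠ 0)
    (ht : Y / (u ^ 2 ^ (m - 1) * G) + u ^ 2 ^ (m - 1) * G ≠ 0) :
    ∑ j ∈ Finset.range m,
        ((Y / (u ^ 2 ^ (m - 1) * G) + u ^ 2 ^ (m - 1) * G)⁻¹) ^ (2 ^ (j + 1) - 1) *
          Y ^ 2 ^ j = 0 := by
  -- characteristic 2
  have hchar2 : ringChar F = 2 := by
    have h2 : (2 : ℕ) ∣ ringChar F := by
      rw [prime_dvd_char_iff_dvd_card 2, hF]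
      exact dvd_pow_self 2 hm.ne'
    have hp : (ringChar F).Prime := CharP.char_is_prime F (ringChar F)
    exact ((Nat.prime_dvd_prime_iff_eq Nat.prime_two hp).mp h2).symm
  haveI : CharP F 2 := hchar2 ▸ ringChar.charP F
  set β : F := u ^ 2 ^ (m - 1) * G with hβdef
  have hβ : β ≠ 0 := mul_ne_zero (pow_ne_zero _ hu) hG
  set t : F := Y / β + β with htdef
  have ht0 : t ≠ 0 := ht
  set x : F := (Y / β) * t⁻¹ with hxdef
  -- key algebraic identity
  have hkey : x ^ 2 + x = Y * (t⁻¹) ^ 2 := by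
    have hYab : (Y / β) * β = Y := div_mul_cancel₀ Y hβ
    have h1 : Y / β + t = β := by
      rw [htdef, ← add_assoc, CharTwo.add_self_eq_zero, zero_add]
    have hx1 : x + 1 = β * t⁻¹ := by
      calc x + 1 = Y / β * t⁻¹ + t * t⁻¹ := by rw [hxdef, mul_inv_cancel₀ ht0]
        _ = (Y / β + t) * t⁻¹ := (add_mul _ _ _).symm
        _ = β * t⁻¹ := by rw [h1]
    have h2 : x ^ 2 + x = x * (x + 1) := by ring
    rw [h2, hx1, hxdef]
    calc Y / β * t⁻¹ * (β * t⁻¹) = Y / β * β * (t⁻¹) ^ 2 := by ring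
      _ = Y * (t⁻¹) ^ 2 := by rw [hYab]
  have hterm : ∀ j, (t⁻¹) ^ (2 ^ (j + 1) - 1) * Y ^ 2 ^ j
      = t * x ^ 2 ^ (j + 1) - t * x ^ 2 ^ j := by
    intro j
    have hpow : (t⁻¹) ^ (2 ^ (j + 1) - 1) = t * ((t⁻¹) ^ 2) ^ 2 ^ j := by
      have : (t⁻¹) ^ (2 ^ (j + 1)) = ((t⁻¹) ^ 2) ^ 2 ^ j := by
        rw [← pow_mul, pow_succ, mul_comm (2 ^ j) 2, pow_mul]
      calc (t⁻¹) ^ (2 ^ (j + 1) - 1) = t * t⁻¹ * (t⁻¹) ^ (2 ^ (j + 1) - 1) := by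
            rw [mul_inv_cancel₀ ht0, one_mul]
        _ = t * ((t⁻¹) ^ (2 ^ (j + 1))) := by
            have he : 2 ^ (j + 1) - 1 + 1 = 2 ^ (j + 1) :=
              Nat.succ_pred_eq_of_pos (pow_pos two_pos _)
            rw [mul_assoc, ← pow_succ', he]
        _ = t * ((t⁻¹) ^ 2) ^ 2 ^ j := by rw [this]
    have hfrob : (x ^ 2 + x) ^ 2 ^ j = x ^ 2 ^ (j + 1) + x ^ 2 ^ j := by
      rw [add_pow_char_pow, ← pow_mul, mul_comm 2 (2 ^ j), ← pow_succ]
    calc (t⁻¹) ^ (2 ^ (j + 1) - 1) * Y ^ 2 ^ j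
        = t * ((Y * (t⁻¹) ^ 2) ^ 2 ^ j) := by rw [hpow, mul_pow]; ring
      _ = t * ((x ^ 2 + x) ^ 2 ^ j) := by rw [hkey]
      _ = t * x ^ 2 ^ (j + 1) - t * x ^ 2 ^ j := by
          rw [hfrob, CharTwo.sub_eq_add]; ring
  rw [Finset.sum_congr rfl fun j _ => hterm j, Finset.sum_range_sub (fun j => t * x ^ 2 ^ j)]
  have : x ^ 2 ^ m = x := by rw [← hF, FiniteField.pow_card]
  rw [this]
  norm_num
end

section
/- Let q = 2^m, n odd, u ∈ F_q^*, v ∈ F_q \ {0,1}, and F(x) = u·x² + v·x on the kernel of the trace: for every x ∈ F_{q^n} with Tr(x) = 0, applying the linearized operator T(Z) = Σ_{j=0}^{m-1} (u^{2^j-1}/v^{2^{j+1}-1}) · (Σ_{k=0}^{(n-1)/2} Z^{q^{2k}})^{2^j} to Z = u·x² + v·x recovers x, i.e., T(u·x² + v·x) = x. -/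
/-!
With `q = #F` and `S = ∑_{k ≤ (n-1)/2} x^(q^(2k))` the half-trace of `x`, the even and odd
Frobenius iterates of `x` together make up the trace plus `x^(q^n) = x`, so `S + S^q = Tr x + x`,
i.e. `S^q = S + x` on the trace-zero hyperplane. In characteristic 2 the map `z ↦ u z² + v z` is
additive and commutes with `z ↦ z^q`, so the half-trace of `u x² + v x` is `u S² + v S`. Finally
the operator `T` telescopes on `u S² + v S` to `(u/v)^(q - 1) S^q - S = S^q - S = x`.
-/

open Finset

theorem Finset.sum_range_even_add_sum_range_odd {M : Type*} [AddCommMonoid M] (f : ℕ → M)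
    (t : ℕ) :
    ∑ k ∈ range t, f (2 * k) + ∑ k ∈ range t, f (2 * k + 1) = ∑ i ∈ range (2 * t), f i := by
  induction t with
  | zero => simp
  | succ t ih =>
    rw [sum_range_succ, sum_range_succ, add_add_add_comm, ih, mul_add_one, sum_range_succ,
      sum_range_succ, add_assoc]

theorem FiniteField.frobeniusAlgHom_pow_apply (F : Type*) {R : Type*} [Field F] [Fintype F]
    [CommRing R] [Algebra F R] (i : ℕ) (y : R) :
    (frobeniusAlgHom F R ^ i) y = y ^ Fintype.card F ^ i := by
  rw [AlgHom.coe_pow, coe_frobeniusAlgHom, pow_iterate]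

section HalfTrace

variable (F : Type*) {K : Type*} [Field F] [Fintype F] [Field K] [Algebra F K]

noncomputable def halfTrace (x : K) : K :=
  ∑ k ∈ range ((Module.finrank F K - 1) / 2 + 1), x ^ Fintype.card F ^ (2 * k)

theorem halfTrace_add_pow_card [Finite K] (hK : Odd (Module.finrank F K)) (x : K) :
    halfTrace F x + halfTrace F x ^ Fintype.card F =
      algebraMap F K (Algebra.trace F K x) + x := by
  obtain ⟨t, ht⟩ := hK
  have hhalf : (Module.finrank F K - 1) / 2 + 1 = t + 1 := by omega
  have hfrob : halfTrace F x ^ Fintype.card F =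
      ∑ k ∈ range (t + 1), x ^ Fintype.card F ^ (2 * k + 1) := by
    rw [halfTrace, hhalf, ← FiniteField.frobeniusAlgHom_apply, map_sum]
    exact sum_congr rfl fun k _ => by rw [FiniteField.frobeniusAlgHom_apply, ← pow_mul, ← pow_succ]
  have hfix : x ^ Fintype.card F ^ Module.finrank F K = x := by
    have := Fintype.ofFinite K
    rw [← Module.card_eq_pow_finrank, FiniteField.pow_card]
  rw [hfrob, halfTrace, hhalf, sum_range_even_add_sum_range_odd (fun i => x ^ Fintype.card F ^ i),
    FiniteField.algebraMap_trace_eq_sum_pow, Nat.card_eq_fintype_card,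
    show 2 * (t + 1) = Module.finrank F K + 1 by omega, sum_range_succ, hfix]

theorem halfTrace_mul_sq_add_mul [CharP K 2] (u v : F) (x : K) :
    halfTrace F (algebraMap F K u * x ^ 2 + algebraMap F K v * x) =
      algebraMap F K u * halfTrace F x ^ 2 + algebraMap F K v * halfTrace F x := by
  simp only [halfTrace, ← FiniteField.frobeniusAlgHom_pow_apply, map_add, map_mul, map_pow,
    AlgHom.commutes, sum_add_distrib, ← mul_sum, sum_pow_char]

end HalfTrace

theorem sum_range_telescope_quadratic {K : Type*} [Field K] [CharP K 2] (a b S : K) (hb : b ≠ 0)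
    (m : ℕ) :
    ∑ j ∈ range m, a ^ (2 ^ j - 1) / b ^ (2 ^ (j + 1) - 1) * (a * S ^ 2 + b * S) ^ 2 ^ j =
      (a / b) ^ (2 ^ m - 1) * S ^ 2 ^ m - S := by
  set c : ℕ → K := fun j => (a / b) ^ (2 ^ j - 1) * S ^ 2 ^ j
  have hstep (j : ℕ) : a ^ (2 ^ j - 1) / b ^ (2 ^ (j + 1) - 1) * (a * S ^ 2 + b * S) ^ 2 ^ j =
      c (j + 1) - c j := by
    have hexp : 2 ^ (j + 1) - 1 = 2 ^ j - 1 + 2 ^ j := by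
      have := Nat.one_le_two_pow (n := j); rw [pow_succ]; omega
    rw [add_pow_char_pow, CharTwo.sub_eq_add]
    simp only [c, hexp, div_pow, mul_pow, ← pow_mul]
    field_simp
    ring
  rw [sum_congr rfl fun j _ => hstep j, sum_range_sub]
  simp [c]

theorem stmt17_general {F K : Type*} [Field F] [Fintype F] [Field K] [Algebra F K]
    (m n : ℕ) (hn : Odd n)
    (hF : Fintype.card F = 2 ^ m) (hK : Module.finrank F K = n)
    (u v : F) (hu : u ≠ 0) (hv0 : v ≠ 0)
    (x : K) (hx : Algebra.trace F K x = 0) :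
    ∑ j ∈ Finset.range m,
        algebraMap F K (u ^ (2 ^ j - 1) / v ^ (2 ^ (j + 1) - 1)) *
          (∑ k ∈ Finset.range ((n - 1) / 2 + 1),
              (algebraMap F K u * x ^ 2 + algebraMap F K v * x) ^ (2 ^ m) ^ (2 * k)) ^ 2 ^ j =
      x := by
  have : CharP F 2 := charP_of_card_eq_prime_pow hF
  have : CharP K 2 := charP_of_injective_algebraMap' F 2
  have : FiniteDimensional F K := Module.finite_of_finrank_pos (hK ▸ hn.pos)
  have : Finite K := Module.finite_of_finite F
  have hS := halfTrace_add_pow_card F (hK ▸ hn) x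
  rw [hx, map_zero, zero_add] at hS
  have hunit : (algebraMap F K u / algebraMap F K v) ^ (Fintype.card F - 1) = 1 := by
    rw [← map_div₀, ← map_pow, FiniteField.pow_card_sub_one_eq_one _ (div_ne_zero hu hv0), map_one]
  rw [← hF, ← hK]
  change ∑ j ∈ range m,
    _ * halfTrace F (algebraMap F K u * x ^ 2 + algebraMap F K v * x) ^ 2 ^ j = x
  simp only [map_div₀, map_pow, halfTrace_mul_sq_add_mul]
  rw [sum_range_telescope_quadratic _ _ _ ((map_ne_zero _).mpr hv0), ← hF, hunit, one_mul,
    CharTwo.sub_eq_add, add_comm, hS]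

theorem stmt17 {F K : Type*} [Field F] [Fintype F] [Field K] [Algebra F K]
    (m n : ℕ) (hm : 0 < m) (hn : Odd n)
    (hF : Fintype.card F = 2 ^ m) (hK : Module.finrank F K = n)
    (u v : F) (hu : u ≠ 0) (hv0 : v ≠ 0) (hv1 : v ≠ 1)
    (x : K) (hx : Algebra.trace F K x = 0) :
    ∑ j ∈ Finset.range m,
        algebraMap F K (u ^ (2 ^ j - 1) / v ^ (2 ^ (j + 1) - 1)) *
          (∑ k ∈ Finset.range ((n - 1) / 2 + 1),
              (algebraMap F K u * x ^ 2 + algebraMap F K v * x) ^ (2 ^ m) ^ (2 * k)) ^ 2 ^ j =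
      x :=
  stmt17_general m n hn hF hK u v hu hv0 x hx
end
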